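/- arXiv:1709.08286 — 7 statements merged into one kernel-verified Lean document; each statement's English description precedes it below -/
import Mathlib

section
/- Fix r > 0, an integer k ≥ 1, and 0 < β < 1. Then there exists a finite semimetric space (X, ρ) with uniform (counting) measure such that: (a) no pair of points has distance strictly between r and 3r (so the measure of medium edges M(X) = 0); (b) the number of (k+1)-antichains satisfies T_{k+1}(X) ≤ β|X|^{k+1}/(k+1)!; and (c) |X| minus the measure of any maximal r-cluster structure of order k is at least β^{1/k}|X|/(k+1). -/
open Finset

def stmtGrp (k s M : ℕ) (x : Fin (k * s + M)) : Fin (k + 1) :=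
  if h : (x : ℕ) < k * s then
    ⟨(x : ℕ) / s + 1, by
      rcases Nat.eq_zero_or_pos s with hs | hs
      · simp [hs] at h
      · have := (Nat.div_lt_iff_lt_mul hs).2 (by omega : (x : ℕ) < k * s)
        omega⟩
  else 0

lemma stmt_card_interval (N a b : ℕ) (hb : b ≤ N) :
    ((Finset.univ : Finset (Fin N)).filter fun x : Fin N => a ≤ (x : ℕ) ∧ (x : ℕ) < b).card
      = b - a := by
  have he : ((Finset.univ : Finset (Fin N)).filter fun x : Fin N => a ≤ (x : ℕ) ∧ (x : ℕ) < b)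
      = (Finset.Ico a b).attachFin (fun m hm => lt_of_lt_of_le (Finset.mem_Ico.1 hm).2 hb) := by
    ext x
    simp [Finset.mem_attachFin, Finset.mem_Ico]
  rw [he, Finset.card_attachFin, Nat.card_Ico]

lemma stmt_card_grp_zero (k s M : ℕ) :
    ((Finset.univ : Finset (Fin (k * s + M))).filter fun x => stmtGrp k s M x = 0).card = M := by
  have he : ((Finset.univ : Finset (Fin (k * s + M))).filter fun x => stmtGrp k s M x = 0)
      = (Finset.univ.filter fun x : Fin (k * s + M) =>
          k * s ≤ (x : ℕ) ∧ (x : ℕ) < k * s + M) := by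
    apply Finset.filter_congr
    intro x _
    have hx := x.isLt
    unfold stmtGrp
    by_cases h : (x : ℕ) < k * s
    · simp only [dif_pos h, Fin.ext_iff, Fin.val_zero]
      generalize (x : ℕ) / s = d
      omega
    · simp only [dif_neg h]
      exact ⟨fun _ => by omega, fun _ => trivial⟩
  rw [he, stmt_card_interval _ _ _ le_rfl]
  omega

lemma stmt_card_grp_succ (k s M : ℕ) (hs : 0 < s) (i : Fin k) :
    ((Finset.univ : Finset (Fin (k * s + M))).filter fun x => stmtGrp k s M x = i.succ).card
      = s := by
  have he : ((Finset.univ : Finset (Fin (k * s + M))).filter fun x => stmtGrp k s M x = i.succ)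
      = (Finset.univ.filter fun x : Fin (k * s + M) =>
          (i : ℕ) * s ≤ (x : ℕ) ∧ (x : ℕ) < ((i : ℕ) + 1) * s) := by
    apply Finset.filter_congr
    intro x _
    have hik : (i : ℕ) < k := i.isLt
    have hi1 : ((i : ℕ) + 1) * s ≤ k * s := Nat.mul_le_mul_right s (by omega)
    unfold stmtGrp
    by_cases h : (x : ℕ) < k * s
    · simp only [dif_pos h, Fin.ext_iff, Fin.val_succ]
      have h1 : (x : ℕ) / s < (i : ℕ) + 1 ↔ (x : ℕ) < ((i : ℕ) + 1) * s :=
        Nat.div_lt_iff_lt_mul hs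
      have h2 : (x : ℕ) / s < (i : ℕ) ↔ (x : ℕ) < (i : ℕ) * s := Nat.div_lt_iff_lt_mul hs
      omega
    · simp only [dif_neg h]
      constructor
      · intro hcon
        exact absurd hcon.symm (Fin.succ_ne_zero i)
      · intro hcon
        omega
  rw [he, stmt_card_interval _ _ _ (by
    have hik : (i : ℕ) < k := i.isLt
    have : ((i : ℕ) + 1) * s ≤ k * s := Nat.mul_le_mul_right s (by omega)
    omega)]
  have : ((i : ℕ) + 1) * s = (i : ℕ) * s + s := by ring
  omega

lemma stmt_fact_le (k : ℕ) : (k + 1).factorial ≤ (k + 1) ^ k := by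
  induction k with
  | zero => simp [Nat.factorial]
  | succ n ih =>
      calc (n + 2).factorial = (n + 2) * (n + 1).factorial := rfl
        _ ≤ (n + 2) * (n + 1) ^ n := Nat.mul_le_mul_left _ ih
        _ ≤ (n + 2) * (n + 2) ^ n := Nat.mul_le_mul_left _ (Nat.pow_le_pow_left (by omega) n)
        _ = (n + 2) ^ (n + 1) := by ring

set_option maxHeartbeats 2000000 in
/-- There exists a finite semimetric space with no medium edges, few
(k+1)-antichains, but any r-cluster structure of order k misses at least
`β^{1/k}|X|/(k+1)` points. -/
theorem stmt_1 (k : ℕ) (hk : 1 ≤ k) (r β : ℝ) (hr : 0 < r)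
    (hβ0 : 0 < β) (hβ1 : β < 1) :
    ∃ N : ℕ, 0 < N ∧ ∃ ρ : Fin N → Fin N → ℝ,
      (∀ x, ρ x x = 0) ∧ (∀ x y, ρ x y = ρ y x) ∧
      (∀ x y z, ρ x z ≤ ρ x y + ρ y z) ∧
      (∀ x y, ¬ (r < ρ x y ∧ ρ x y ≤ 3 * r)) ∧
      ((1 / (Nat.factorial (k + 1) : ℝ)) *
        Set.ncard {f : Fin (k + 1) → Fin N |
          ∀ i j : Fin (k + 1), i < j → r < ρ (f i) (f j)}
        ≤ β * (N : ℝ) ^ (k + 1) / (Nat.factorial (k + 1) : ℝ)) ∧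
      (∀ C : Fin k → Finset (Fin N),
        (∀ i j, i ≠ j → Disjoint (C i) (C j)) →
        (∀ i, ∀ x ∈ C i, ∀ y ∈ C i, ρ x y ≤ 2 * r) →
        (∀ i j, i ≠ j → ∀ x ∈ C i, ∀ y ∈ C j, r ≤ ρ x y) →
        β ^ ((1 : ℝ) / k) * N / (k + 1) ≤ (N : ℝ) - ∑ i, ((C i).card : ℝ)) := by
  classical
  have hkR : (1 : ℝ) ≤ (k : ℝ) := by exact_mod_cast hk
  have hk0 : (k : ℝ) ≠ 0 := by positivity
  obtain ⟨b, hbdef⟩ : ∃ b : ℝ, b = β ^ ((1 : ℝ) / k) := ⟨_, rfl⟩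
  have hb0 : 0 < b := hbdef ▸ Real.rpow_pos_of_pos hβ0 _
  have hb1 : b < 1 := hbdef ▸ Real.rpow_lt_one hβ0.le hβ1 (by positivity)
  have hbk : b ^ k = β := by
    rw [hbdef, ← Real.rpow_natCast (β ^ ((1 : ℝ) / k)) k, ← Real.rpow_mul hβ0.le]
    rw [one_div_mul_cancel hk0, Real.rpow_one]
  obtain ⟨K, hKdef⟩ : ∃ K : ℝ, K = (k : ℝ) + 1 := ⟨_, rfl⟩
  have hK0 : (0 : ℝ) < K := by rw [hKdef]; positivity
  obtain ⟨F, hFdef⟩ : ∃ F : ℝ, F = ((k + 1).factorial : ℝ) := ⟨_, rfl⟩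
  have hF0 : (0 : ℝ) < F := by
    rw [hFdef]
    exact_mod_cast (k + 1).factorial_pos
  have hfact : F ≤ K ^ k := by
    have h : ((k + 1).factorial : ℝ) ≤ (((k + 1) ^ k : ℕ) : ℝ) := by
      exact_mod_cast stmt_fact_le k
    rw [hFdef, hKdef]
    push_cast at h ⊢
    exact h
  have hKkb : (0 : ℝ) < K - k * b := by rw [hKdef]; nlinarith
  obtain ⟨A, hAdef⟩ : ∃ A : ℝ, A = F * (K - k * b) / K ^ (k + 1) := ⟨_, rfl⟩
  have hA0 : 0 < A := hAdef ▸ div_pos (mul_pos hF0 hKkb) (pow_pos hK0 _)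
  have hA1 : A < 1 := by
    rw [hAdef, div_lt_one (pow_pos hK0 _)]
    have hkb : (0 : ℝ) < (k : ℝ) * b := by positivity
    have h1 : F * (K - k * b) < F * K := by nlinarith
    have h2 : F * K ≤ K ^ k * K := mul_le_mul_of_nonneg_right hfact hK0.le
    have h3 : K ^ k * K = K ^ (k + 1) := by ring
    linarith
  obtain ⟨c, hcdef⟩ : ∃ c : ℝ, c = A ^ (-(1 : ℝ) / k) := ⟨_, rfl⟩
  have hc1 : 1 < c := by
    rw [hcdef]
    refine (Real.one_lt_rpow_iff_of_pos hA0).2 (Or.inr ⟨hA1, ?_⟩)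
    apply div_neg_of_neg_of_pos
    · norm_num
    · positivity
  have hc0 : 0 < c := lt_trans one_pos hc1
  have hck : c ^ k = A⁻¹ := by
    rw [hcdef, ← Real.rpow_natCast (A ^ (-(1 : ℝ) / k)) k, ← Real.rpow_mul hA0.le]
    have he : (-(1 : ℝ) / k) * k = -1 := by field_simp
    rw [he, Real.rpow_neg_one]
  obtain ⟨N, hN⟩ := exists_nat_gt (max (max (K / ((c - 1) * b)) (k * K / (K - k * b)))
    (K / (1 - b)))
  have hn1 : K / ((c - 1) * b) < N :=
    lt_of_le_of_lt (le_trans (le_max_left _ _) (le_max_left _ _)) hN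
  have hn2 : (k : ℝ) * K / (K - k * b) < N :=
    lt_of_le_of_lt (le_trans (le_max_right _ _) (le_max_left _ _)) hN
  have hn3 : K / (1 - b) < N := lt_of_le_of_lt (le_max_right _ _) hN
  have hNR0 : (0 : ℝ) < N := by
    have : (0 : ℝ) < K / (1 - b) := by
      apply div_pos hK0
      linarith
    linarith
  have hNpos : 0 < N := by exact_mod_cast hNR0
  obtain ⟨s, hsdef⟩ : ∃ s : ℕ, s = ⌈b * N / K⌉₊ := ⟨_, rfl⟩
  have hs_lb : b * N / K ≤ (s : ℝ) := hsdef ▸ Nat.le_ceil _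
  have hs_ub : (s : ℝ) < b * N / K + 1 := by
    rw [hsdef]
    exact Nat.ceil_lt_add_one (by positivity)
  have hspos : 0 < s := by
    rw [hsdef]
    exact Nat.ceil_pos.2 (by positivity)
  have hsR0 : (0 : ℝ) ≤ (s : ℝ) := Nat.cast_nonneg s
  have e1 : (k : ℝ) * K < (N : ℝ) * (K - k * b) := (div_lt_iff₀ hKkb).1 hn2
  have e3 : K < (N : ℝ) * ((c - 1) * b) :=
    (div_lt_iff₀ (mul_pos (by linarith) hb0)).1 hn1
  have hKsplit : b * N / K * K = b * N := div_mul_cancel₀ _ (ne_of_gt hK0)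
  have hksNR : (k : ℝ) * s < (N : ℝ) := by
    have hkRpos : (0 : ℝ) < (k : ℝ) := by linarith
    have h1 := mul_lt_mul_of_pos_left hs_ub hkRpos
    rw [mul_add, mul_one] at h1
    have h2 : ((k : ℝ) * (b * N / K) + k) * K ≤ (N : ℝ) * K := by
      have hh : (k : ℝ) * (b * N / K) * K = k * (b * N) := by
        rw [mul_assoc, hKsplit]
      have : ((k : ℝ) * (b * N / K) + k) * K = k * (b * N) + k * K := by
        rw [add_mul, hh]
      rw [this]
      ring_nf at e1 ⊢
      linarith
    have h3 : (k : ℝ) * (b * N / K) + k ≤ N :=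
      le_of_mul_le_mul_right h2 hK0
    linarith
  have hksN : k * s < N := by exact_mod_cast hksNR
  have hk1sNR : ((k : ℝ) + 1) * s < (N : ℝ) := by
    have h0 : K ≤ (N : ℝ) * (1 - b) := by
      rw [div_lt_iff₀ (by linarith : (0 : ℝ) < 1 - b)] at hn3
      linarith
    have hm := mul_lt_mul_of_pos_left hs_ub hK0
    have hKs : K * (b * N / K + 1) = b * N + K := by
      rw [mul_add, mul_one, mul_div_cancel₀ _ (ne_of_gt hK0)]
    rw [hKs] at hm
    have h1 : ((k : ℝ) + 1) * s < b * N + K := by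
      rw [← hKdef]
      exact hm
    ring_nf at h0 ⊢
    rw [hKdef] at h1
    ring_nf at h1
    linarith
  have hk1sN : (k + 1) * s ≤ N := by
    have h4 : (((k + 1) * s : ℕ) : ℝ) < (N : ℝ) := by push_cast; exact hk1sNR
    have := (Nat.cast_lt (α := ℝ)).1 h4
    omega
  obtain ⟨M, hMdef⟩ : ∃ M : ℕ, M = N - k * s := ⟨_, rfl⟩
  have hNe : k * s + M = N := by omega
  have hsM : s ≤ M := by
    have h5 : (k + 1) * s = k * s + s := by ring
    omega
  have hM1 : 1 ≤ M := le_trans hspos hsM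
  have hcast : ((k * s + M : ℕ) : ℝ) = (N : ℝ) := by exact_mod_cast congrArg Nat.cast hNe
  have hMR : (M : ℝ) = (N : ℝ) - k * s := by
    push_cast at hcast
    linarith [hcast]
  -- the space
  refine ⟨k * s + M, by omega,
    fun x y => if stmtGrp k s M x = stmtGrp k s M y then 0 else 4 * r,
    ?_, ?_, ?_, ?_, ?_, ?_⟩
  · intro x; simp
  · intro x y
    beta_reduce
    by_cases h : stmtGrp k s M x = stmtGrp k s M y
    · rw [if_pos h, if_pos h.symm]
    · rw [if_neg h, if_neg (fun hc => h hc.symm)]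
  · intro x y z
    beta_reduce
    have hnn : ∀ u v : Fin (k * s + M),
        (0 : ℝ) ≤ if stmtGrp k s M u = stmtGrp k s M v then 0 else 4 * r := by
      intro u v
      split_ifs <;> linarith
    rcases eq_or_ne (stmtGrp k s M x) (stmtGrp k s M z) with h1 | h1
    · rw [if_pos h1]
      have := hnn x y
      have := hnn y z
      linarith
    · rw [if_neg h1]
      rcases eq_or_ne (stmtGrp k s M x) (stmtGrp k s M y) with h2 | h2
      · have h3 : stmtGrp k s M y ≠ stmtGrp k s M z := fun hc => h1 (h2.trans hc)
        rw [if_pos h2, if_neg h3]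
        linarith
      · rw [if_neg h2]
        have := hnn y z
        linarith
  · intro x y
    beta_reduce
    by_cases h : stmtGrp k s M x = stmtGrp k s M y
    · rw [if_pos h]; rintro ⟨h1, _⟩; linarith
    · rw [if_neg h]; rintro ⟨_, h2⟩; linarith
  -- counting
  · show (1 / (Nat.factorial (k + 1) : ℝ)) *
        Set.ncard {f : Fin (k + 1) → Fin (k * s + M) |
          ∀ i j : Fin (k + 1), i < j →
            r < if stmtGrp k s M (f i) = stmtGrp k s M (f j) then 0 else 4 * r}
        ≤ β * ((k * s + M : ℕ) : ℝ) ^ (k + 1) / (Nat.factorial (k + 1) : ℝ)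
    have hncard : {f : Fin (k + 1) → Fin (k * s + M) |
        ∀ i j : Fin (k + 1), i < j →
          r < if stmtGrp k s M (f i) = stmtGrp k s M (f j) then 0 else 4 * r}.ncard
        = (Finset.univ.filter (fun f : Fin (k + 1) → Fin (k * s + M) =>
            ∀ i j : Fin (k + 1), i < j →
              r < if stmtGrp k s M (f i) = stmtGrp k s M (f j) then 0 else 4 * r)).card := by
      rw [Set.ncard_eq_toFinset_card', Set.toFinset_setOf]
    have hTsub : Finset.univ.filter (fun f : Fin (k + 1) → Fin (k * s + M) =>
            ∀ i j : Fin (k + 1), i < j →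
              r < if stmtGrp k s M (f i) = stmtGrp k s M (f j) then 0 else 4 * r) ⊆
        (Finset.univ : Finset (Equiv.Perm (Fin (k + 1)))).biUnion
          (fun σ => Fintype.piFinset fun i =>
            Finset.univ.filter fun x => stmtGrp k s M x = σ i) := by
      intro f hf
      have hP := (Finset.mem_filter.1 hf).2
      have hinj : Function.Injective (fun i => stmtGrp k s M (f i)) := by
        intro i j hij
        by_contra hne
        rcases lt_or_gt_of_ne hne with h | h
        · have := hP i j h
          rw [if_pos hij] at this
          linarith
        · have := hP j i h
          rw [if_pos hij.symm] at this
          linarith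
      have hbij := Finite.injective_iff_bijective.1 hinj
      refine Finset.mem_biUnion.2 ⟨Equiv.ofBijective _ hbij, Finset.mem_univ _, ?_⟩
      rw [Fintype.mem_piFinset]
      intro i
      exact Finset.mem_filter.2 ⟨Finset.mem_univ _, rfl⟩
    have hbox : ∀ σ : Equiv.Perm (Fin (k + 1)),
        (Fintype.piFinset fun i =>
          Finset.univ.filter fun x => stmtGrp k s M x = σ i).card
          = M * s ^ k := by
      intro σ
      rw [Fintype.card_piFinset]
      rw [Equiv.prod_comp σ
        (fun j => (Finset.univ.filter fun x => stmtGrp k s M x = j).card)]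
      rw [Fin.prod_univ_succ]
      rw [stmt_card_grp_zero]
      have hsc : ∀ i : Fin k,
          ((Finset.univ : Finset (Fin (k * s + M))).filter
            fun x => stmtGrp k s M x = Fin.succ i).card = s :=
        stmt_card_grp_succ k s M hspos
      simp [hsc]
    have hcardT : (Finset.univ.filter (fun f : Fin (k + 1) → Fin (k * s + M) =>
            ∀ i j : Fin (k + 1), i < j →
              r < if stmtGrp k s M (f i) = stmtGrp k s M (f j) then 0 else 4 * r)).card
          ≤ (k + 1).factorial * (M * s ^ k) := by
      refine le_trans (Finset.card_le_card hTsub) ?_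
      refine le_trans Finset.card_biUnion_le ?_
      rw [Finset.sum_congr rfl (fun σ _ => hbox σ), Finset.sum_const, Finset.card_univ,
        Fintype.card_perm, Fintype.card_fin, smul_eq_mul]
    have hreal : F * ((M : ℝ) * (s : ℝ) ^ k) ≤ β * ((k * s + M : ℕ) : ℝ) ^ (k + 1) := by
      have hx0 : (0 : ℝ) < b * N := by positivity
      have h1 : (s : ℝ) ≤ (b * N + K) / K := by
        rw [add_div, div_self (ne_of_gt hK0)]
        linarith
      have h2 : (s : ℝ) ^ k ≤ ((b * N + K) / K) ^ k :=
        pow_le_pow_left₀ hsR0 h1 k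
      have h3 : (M : ℝ) ≤ (N : ℝ) * (K - k * b) / K := by
        rw [hMR, le_div_iff₀ hK0]
        have hexp : ((N : ℝ) - k * s) * K = N * K - k * s * K := by ring
        rw [hexp]
        have hmul := mul_le_mul_of_nonneg_right
          (mul_le_mul_of_nonneg_left hs_lb (by positivity : (0 : ℝ) ≤ (k : ℝ))) hK0.le
        have hks : (k : ℝ) * (b * N / K) * K = k * (b * N) := by
          rw [mul_assoc, hKsplit]
        rw [hks] at hmul
        ring_nf at hmul ⊢
        linarith
      have step1 : F * ((M : ℝ) * (s : ℝ) ^ k)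
          ≤ F * (((N : ℝ) * (K - k * b) / K) * ((b * N + K) / K) ^ k) := by
        apply mul_le_mul_of_nonneg_left _ hF0.le
        apply mul_le_mul h3 h2 (by positivity) (by positivity)
      have step2 : F * (((N : ℝ) * (K - k * b) / K) * ((b * N + K) / K) ^ k)
          = A * ((N : ℝ) * (b * N + K) ^ k) := by
        rw [hAdef, div_pow]
        have hKne : K ≠ 0 := ne_of_gt hK0
        field_simp
        ring
      have hcb : b * N + K ≤ c * (b * N) := by
        ring_nf at e3 ⊢
        linarith
      have step3 : (b * N + K) ^ k ≤ (c * (b * N)) ^ k :=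
        pow_le_pow_left₀ (by positivity) hcb k
      have step4 : A * ((N : ℝ) * (b * N + K) ^ k)
          ≤ A * ((N : ℝ) * (c * (b * N)) ^ k) := by
        apply mul_le_mul_of_nonneg_left _ hA0.le
        apply mul_le_mul_of_nonneg_left step3 (le_of_lt hNR0)
      have step5 : A * ((N : ℝ) * (c * (b * N)) ^ k) = β * (N : ℝ) ^ (k + 1) := by
        rw [mul_pow, hck, mul_pow, hbk]
        have hAne : A ≠ 0 := ne_of_gt hA0
        have hre : A * ((N : ℝ) * (A⁻¹ * (β * (N : ℝ) ^ k)))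
            = (A * A⁻¹) * (β * ((N : ℝ) ^ k * (N : ℝ))) := by ring
        rw [hre, mul_inv_cancel₀ hAne, one_mul, pow_succ]
      rw [hcast]
      calc F * ((M : ℝ) * (s : ℝ) ^ k)
          ≤ F * (((N : ℝ) * (K - k * b) / K) * ((b * N + K) / K) ^ k) := step1
        _ = A * ((N : ℝ) * (b * N + K) ^ k) := step2
        _ ≤ A * ((N : ℝ) * (c * (b * N)) ^ k) := step4
        _ = β * (N : ℝ) ^ (k + 1) := step5
    rw [hncard, one_div_mul_eq_div, div_le_div_iff_of_pos_right (by positivity)]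
    calc ((Finset.univ.filter (fun f : Fin (k + 1) → Fin (k * s + M) =>
            ∀ i j : Fin (k + 1), i < j →
              r < if stmtGrp k s M (f i) = stmtGrp k s M (f j) then 0 else 4 * r)).card : ℝ)
        ≤ (((k + 1).factorial * (M * s ^ k) : ℕ) : ℝ) := by exact_mod_cast hcardT
      _ = F * ((M : ℝ) * (s : ℝ) ^ k) := by rw [hFdef]; push_cast; ring
      _ ≤ β * ((k * s + M : ℕ) : ℝ) ^ (k + 1) := hreal
  -- clusters
  · intro C hdisj hdiam _
    have hconst : ∀ i, ∀ x ∈ C i, ∀ y ∈ C i, stmtGrp k s M x = stmtGrp k s M y := by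
      intro i x hx y hy
      by_contra hne
      have := hdiam i x hx y hy
      beta_reduce at this
      rw [if_neg hne] at this
      linarith
    obtain ⟨γ, hγdef⟩ : ∃ γ : Fin k → Fin (k + 1), γ = fun i =>
        if h : (C i).Nonempty then stmtGrp k s M h.choose else 0 := ⟨_, rfl⟩
    have hγ : ∀ i, ∀ x ∈ C i, stmtGrp k s M x = γ i := by
      intro i x hx
      have hne : (C i).Nonempty := ⟨x, hx⟩
      rw [hγdef]
      simp only [dif_pos hne]
      exact hconst i x hx _ hne.choose_spec
    obtain ⟨j, hj⟩ : ∃ j : Fin (k + 1), j ∉ Finset.univ.image γ := by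
      by_contra h
      push_neg at h
      have hsub : (Finset.univ : Finset (Fin (k + 1))) ⊆ Finset.univ.image γ :=
        fun j _ => h j
      have hc1 := Finset.card_le_card hsub
      have hc2 := Finset.card_image_le (s := (Finset.univ : Finset (Fin k))) (f := γ)
      simp only [Finset.card_univ, Fintype.card_fin] at hc1 hc2
      omega
    have hfibAll : ∀ jj : Fin (k + 1),
        s ≤ (Finset.univ.filter fun x => stmtGrp k s M x = jj).card := by
      intro jj
      induction jj using Fin.cases with
      | zero => rw [stmt_card_grp_zero]; exact hsM
      | succ i => rw [stmt_card_grp_succ k s M hspos]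
    have hfib := hfibAll j
    have hUcard : ∑ i, (C i).card = (Finset.univ.biUnion C).card :=
      (Finset.card_biUnion (fun x _ y _ hxy => hdisj x y hxy)).symm
    have hdisjU : Disjoint (Finset.univ.biUnion C)
        (Finset.univ.filter fun x => stmtGrp k s M x = j) := by
      rw [Finset.disjoint_left]
      intro x hx hxf
      obtain ⟨i, _, hxi⟩ := Finset.mem_biUnion.1 hx
      have h1 : stmtGrp k s M x = γ i := hγ i x hxi
      have h2 : stmtGrp k s M x = j := (Finset.mem_filter.1 hxf).2
      apply hj
      rw [← h2, h1]
      exact Finset.mem_image_of_mem γ (Finset.mem_univ i)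
    have hsum : (Finset.univ.biUnion C).card + s ≤ k * s + M := by
      calc (Finset.univ.biUnion C).card + s
          ≤ (Finset.univ.biUnion C).card
            + (Finset.univ.filter fun x => stmtGrp k s M x = j).card :=
            Nat.add_le_add_left hfib _
        _ = ((Finset.univ.biUnion C)
            ∪ (Finset.univ.filter fun x => stmtGrp k s M x = j)).card :=
            (Finset.card_union_of_disjoint hdisjU).symm
        _ ≤ (Finset.univ : Finset (Fin (k * s + M))).card :=
            Finset.card_le_card (Finset.subset_univ _)
        _ = k * s + M := by simp
    have hsumR : (∑ i, ((C i).card : ℝ)) + (s : ℝ) ≤ ((k * s + M : ℕ) : ℝ) := by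
      have h0 : ((∑ i, (C i).card : ℕ) : ℝ) + (s : ℝ) ≤ ((k * s + M : ℕ) : ℝ) := by
        rw [hUcard]
        exact_mod_cast hsum
      push_cast at h0 ⊢
      linarith
    have hgoal : b * ((k * s + M : ℕ) : ℝ) / K ≤ (s : ℝ) := by
      rw [hcast]
      exact hs_lb
    rw [← hbdef]
    rw [hKdef] at hgoal
    push_cast at hsumR hgoal ⊢
    linarith
end

section
/- Let (A, ρ) be a finite semimetric space of diameter at most 3r, and let B ⊆ A be a 2r-cluster (subset of diameter ≤ 2r) of maximal cardinality among all 2r-clusters in A. Then the number of unordered pairs {x,y} ⊆ A with r < ρ(x,y) ≤ 3r is at least (1/2)·max{|A|, 2|B|}·|A \ B|. -/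
/-!
Every `r`-ball is a `2r`-cluster, so there are at most `|A| |B|` ordered pairs at distance `≤ r`,
and by the diameter bound all other pairs are medium. The finer bound `|B|² + |A \ B|²` on the
near pairs, giving `2 |B| |A \ B|` medium pairs, rests on a fact about independent sets of the
graph of pairs at distance `> 2r`: when a maximum one has more than half of the vertices, some
vertex lies in all of them.
-/

open Finset

section Cluster

variable {ι : Type*} (ρ : ι → ι → ℝ) (d : ℝ)

def IsCluster (C : Finset ι) : Prop := ∀ x ∈ C, ∀ y ∈ C, ρ x y ≤ d

def IsMaxCluster (A C : Finset ι) : Prop :=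
  C ⊆ A ∧ IsCluster ρ d C ∧ ∀ C' ⊆ A, IsCluster ρ d C' → #C' ≤ #C

noncomputable def farNbhd (A S : Finset ι) : Finset ι := {y ∈ A | ∃ s ∈ S, d < ρ s y}

variable {ρ d}

lemma IsCluster.mono {C C' : Finset ι} (hC : IsCluster ρ d C) (h : C' ⊆ C) :
    IsCluster ρ d C' :=
  fun x hx y hy => hC x (h hx) y (h hy)

variable [DecidableEq ι]

/-- Hall's marriage theorem, applied to the bipartite graph of pairs at distance `> d`. -/
lemma exists_injOn_far {A T : Finset ι} (hT : ∀ S ⊆ T, #S ≤ #(farNbhd ρ d A S)) :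
    ∃ g : ι → ι, Set.InjOn g T ∧ ∀ x ∈ T, g x ∈ A ∧ d < ρ x (g x) := by
  have hall (s : Finset T) : #s ≤ #(s.biUnion fun x => farNbhd ρ d A {x.1}) := by
    have h : s.biUnion (fun x => farNbhd ρ d A {x.1})
        = farNbhd ρ d A (s.map (Function.Embedding.subtype _)) := by
      ext y; simp only [mem_biUnion, farNbhd, mem_filter, mem_singleton, mem_map]; aesop
    rw [h]
    have hsub : s.map (Function.Embedding.subtype _) ⊆ T := fun y hy => by
      obtain ⟨x, -, rfl⟩ := mem_map.1 hy
      exact x.2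
    simpa using hT _ hsub
  obtain ⟨f, hinj, hf⟩ := (all_card_le_biUnion_card_iff_exists_injective _).1 hall
  refine ⟨fun x => if h : x ∈ T then f ⟨x, h⟩ else x, fun x hx y hy hxy => ?_, fun x hx => ?_⟩
  · dsimp only at hxy
    rw [dif_pos (mem_coe.1 hx), dif_pos (mem_coe.1 hy)] at hxy
    exact congrArg Subtype.val (hinj hxy)
  · simpa [dif_pos hx, farNbhd] using hf ⟨x, hx⟩

lemma exists_card_farNbhd_lt {A M : Finset ι} (hMA : M ⊆ A) (hM : IsCluster ρ d M)
    (hcard : #A < 2 * #M) : ∃ S ⊆ M, #(farNbhd ρ d A S) < #S := by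
  by_contra! hall
  obtain ⟨g, hinj, hg⟩ := exists_injOn_far hall
  have hmaps : Set.MapsTo g M ↑(A \ M) := fun x hx =>
    mem_sdiff.2 ⟨(hg x hx).1, fun hgx => (hg x hx).2.not_ge (hM x hx _ hgx)⟩
  have := card_le_card_of_injOn g hmaps hinj
  rw [card_sdiff_of_subset hMA] at this
  omega

lemma IsCluster.card_inter_union_image_le {C T : Finset ι} (hC : IsCluster ρ d C) {g : ι → ι}
    (hfar : ∀ x ∈ T, d < ρ x (g x)) : #(C ∩ (T ∪ T.image g)) ≤ #T := by
  have hcover : C ∩ (T ∪ T.image g) ⊆ T.biUnion fun x => C ∩ {x, g x} := by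
    intro u hu
    simp only [mem_inter, mem_union, mem_image] at hu
    obtain ⟨huC, hu | ⟨x, hx, rfl⟩⟩ := hu
    · exact mem_biUnion.2 ⟨u, hu, by simp [huC]⟩
    · exact mem_biUnion.2 ⟨x, hx, by simp [huC]⟩
  calc #(C ∩ (T ∪ T.image g)) ≤ ∑ x ∈ T, #(C ∩ {x, g x}) :=
        (card_le_card hcover).trans card_biUnion_le
    _ ≤ ∑ _x ∈ T, 1 := sum_le_sum fun x hx => card_le_one.2 fun u hu v hv => by
        simp only [mem_inter, mem_insert, mem_singleton] at hu hv
        have := hfar x hx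
        rcases hu with ⟨huC, rfl | rfl⟩ <;> rcases hv with ⟨hvC, rfl | rfl⟩ <;>
          first | rfl | linarith [hC _ huC _ hvC, hC _ hvC _ huC]
    _ = #T := by simp

variable (hsymm : ∀ x y, ρ x y = ρ y x)
include hsymm

lemma IsCluster.sdiff_farNbhd_union {A C Z : Finset ι} (hCA : C ⊆ A) (hC : IsCluster ρ d C)
    (hZ : IsCluster ρ d Z) : IsCluster ρ d (C \ (Z ∪ farNbhd ρ d A Z) ∪ Z) := by
  have hnear : ∀ u ∈ C \ (Z ∪ farNbhd ρ d A Z), ∀ v ∈ Z, ρ v u ≤ d := fun u hu v hv => by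
    by_contra! h
    simp only [mem_sdiff, mem_union, farNbhd, mem_filter, not_or] at hu
    exact hu.2.2 ⟨hCA hu.1, v, hv, h⟩
  intro u hu v hv
  rcases mem_union.1 hu with hu | hu <;> rcases mem_union.1 hv with hv | hv
  · exact hC u (mem_sdiff.1 hu).1 v (mem_sdiff.1 hv).1
  · exact hsymm u v ▸ hnear u hu v hv
  · exact hnear v hv u hu
  · exact hZ u hu v hv

/-- If a maximum cluster fills more than half of `A`, then some point lies in every maximum
cluster: a minimal Hall violator `Z` inside a maximum cluster has exactly `#Z - 1` far neighbours,
matched to `Z` minus a point `z`, and any cluster avoiding `z` could be enlarged by trading its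
part of `Z ∪ farNbhd Z` for `Z`. -/
theorem exists_mem_forall_isMaxCluster {A B : Finset ι} (hB : IsMaxCluster ρ d A B)
    (hcard : #A < 2 * #B) : ∃ x ∈ A, ∀ C, IsMaxCluster ρ d A C → x ∈ C := by
  obtain ⟨hBA, hBc, -⟩ := hB
  obtain ⟨S₀, hS₀B, hS₀⟩ := exists_card_farNbhd_lt hBA hBc hcard
  obtain ⟨Z, hZ, hZmin⟩ := exists_min_image {S ∈ B.powerset | #(farNbhd ρ d A S) < #S} card
    ⟨S₀, mem_filter.2 ⟨mem_powerset.2 hS₀B, hS₀⟩⟩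
  obtain ⟨hZB, hZN⟩ := mem_filter.1 hZ
  rw [mem_powerset] at hZB
  obtain ⟨z, hz⟩ : Z.Nonempty := card_pos.1 (by omega)
  have hZz := card_erase_of_mem hz
  have hall : ∀ S ⊆ Z.erase z, #S ≤ #(farNbhd ρ d A S) := fun S hS => by
    by_contra! h
    have := hZmin S (mem_filter.2 ⟨mem_powerset.2 (hS.trans ((erase_subset _ _).trans hZB)), h⟩)
    have := card_le_card hS
    omega
  obtain ⟨g, hinj, hg⟩ := exists_injOn_far hall
  have hN : (Z.erase z).image g = farNbhd ρ d A Z := by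
    refine eq_of_subset_of_card_le (fun y hy => ?_) ?_
    · obtain ⟨x, hx, rfl⟩ := mem_image.1 hy
      exact mem_filter.2 ⟨(hg x hx).1, x, mem_of_mem_erase hx, (hg x hx).2⟩
    · rw [card_image_of_injOn hinj]
      omega
  refine ⟨z, hBA (hZB hz), fun C ⟨hCA, hC, hCmax⟩ => ?_⟩
  by_contra hzC
  have hswap := hCmax _ (union_subset (sdiff_subset.trans hCA) (hZB.trans hBA))
    (hC.sdiff_farNbhd_union hsymm hCA (hBc.mono hZB))
  rw [card_union_of_disjoint (disjoint_sdiff_self_left.mono_right subset_union_left)] at hswap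
  have hinter : C ∩ (Z ∪ farNbhd ρ d A Z) ⊆ C ∩ (Z.erase z ∪ (Z.erase z).image g) := by
    rw [hN]
    intro u hu
    simp only [mem_inter, mem_union, mem_erase] at hu ⊢
    exact ⟨hu.1, hu.2.imp_left fun huZ => ⟨fun h => hzC (h ▸ hu.1), huZ⟩⟩
  have := (card_le_card hinter).trans (hC.card_inter_union_image_le fun x hx => (hg x hx).2)
  have := card_sdiff_add_card_inter C (Z ∪ farNbhd ρ d A Z)
  omega

omit hsymm in
lemma IsMaxCluster.erase {A B : Finset ι} {x : ι} (hB : IsMaxCluster ρ d A B)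
    (hx : ∀ C, IsMaxCluster ρ d A C → x ∈ C) : IsMaxCluster ρ d (A.erase x) (B.erase x) := by
  refine ⟨erase_subset_erase _ hB.1, hB.2.1.mono (erase_subset _ _), fun C hCA hC => ?_⟩
  have hle := hB.2.2 C (hCA.trans (erase_subset _ _)) hC
  have hne : #C ≠ #B := fun h =>
    notMem_erase x A (hCA (hx C ⟨hCA.trans (erase_subset _ _), hC, h ▸ hB.2.2⟩))
  have := card_erase_of_mem (hx B hB)
  omega

end Cluster

section NearPairs

variable {ι : Type*} (ρ : ι → ι → ℝ) (r : ℝ)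

noncomputable def nearPairs (A : Finset ι) : Finset (ι × ι) := {p ∈ A ×ˢ A | ρ p.1 p.2 ≤ r}

lemma card_nearPairs_eq_sum (A : Finset ι) :
    #(nearPairs ρ r A) = ∑ x ∈ A, #{y ∈ A | ρ x y ≤ r} := by
  simp only [nearPairs, card_filter, sum_product]

variable {ρ r} (hsymm : ∀ x y, ρ x y = ρ y x)
include hsymm

lemma isCluster_ball (htri : ∀ x y z, ρ x z ≤ ρ x y + ρ y z) (A : Finset ι) (x : ι) :
    IsCluster ρ (2 * r) {y ∈ A | ρ x y ≤ r} := fun u hu v hv => by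
  rw [mem_filter] at hu hv
  linarith [htri u x v, hsymm u x]

lemma card_nearPairs_le_mul (htri : ∀ x y z, ρ x z ≤ ρ x y + ρ y z) {A B : Finset ι}
    (hB : ∀ C ⊆ A, IsCluster ρ (2 * r) C → #C ≤ #B) : #(nearPairs ρ r A) ≤ #A * #B := by
  rw [card_nearPairs_eq_sum]
  calc ∑ x ∈ A, #{y ∈ A | ρ x y ≤ r} ≤ ∑ _x ∈ A, #B :=
        sum_le_sum fun x _ => hB _ (filter_subset _ _) (isCluster_ball hsymm htri A x)
    _ = #A * #B := by rw [sum_const, smul_eq_mul]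

variable [DecidableEq ι]

lemma card_nearPairs_add_one {A : Finset ι} {x : ι} (hx : x ∈ A) (hxx : ρ x x ≤ r) :
    #(nearPairs ρ r A) + 1 = #(nearPairs ρ r (A.erase x)) + 2 * #{y ∈ A | ρ x y ≤ r} := by
  simp only [nearPairs, card_filter, sum_product]
  have hrow (y : ι) : ∑ w ∈ A, (if ρ y w ≤ r then 1 else 0)
      = (if ρ y x ≤ r then 1 else 0) + ∑ w ∈ A.erase x, (if ρ y w ≤ r then 1 else 0) :=
    (add_sum_erase _ _ hx).symm
  rw [← add_sum_erase _ _ hx, hrow x, sum_congr rfl fun y _ => hrow y, sum_add_distrib,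
    if_pos hxx]
  simp only [hsymm _ x]
  ring

/-- Induction on `#A`: while a maximum cluster `B` fills more than half of `A`, delete a point
common to all maximum clusters; this lowers `#B` by one and keeps `#(A \ B)`. -/
theorem card_nearPairs_le (htri : ∀ x y z, ρ x z ≤ ρ x y + ρ y z) (hrefl : ∀ x, ρ x x = 0)
    (hr : 0 ≤ r) {A B : Finset ι} (hB : IsMaxCluster ρ (2 * r) A B) :
    #(nearPairs ρ r A) ≤ #B ^ 2 + #(A \ B) ^ 2 := by
  induction A using Finset.strongInduction generalizing B with
  | H A ih =>
  have hsplit := card_sdiff_add_card_eq_card hB.1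
  by_cases hcard : 2 * #B ≤ #A
  · have := card_nearPairs_le_mul hsymm htri hB.2.2
    have : #A * #B ≤ #B ^ 2 + #(A \ B) ^ 2 := by nlinarith
    omega
  obtain ⟨x, hxA, hx⟩ := exists_mem_forall_isMaxCluster hsymm hB (by omega)
  have hxB := hx B hB
  have hIH := ih _ (erase_ssubset hxA) (hB.erase hx)
  rw [← erase_sdiff_distrib, erase_eq_of_notMem fun h => (mem_sdiff.1 h).2 hxB] at hIH
  have hstep := card_nearPairs_add_one hsymm hxA ((hrefl x).symm ▸ hr)
  have hball := hB.2.2 _ (filter_subset _ _) (isCluster_ball hsymm htri A x)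
  have := card_erase_add_one hxB
  nlinarith

end NearPairs

/-- In a finite semimetric space of diameter ≤ 3r, if B is a maximum-size
2r-cluster, then the number of medium edges is at least
`(1/2) max(|A|, 2|B|) |A \ B|`. -/
theorem stmt_2 {ι : Type*} [DecidableEq ι] (r : ℝ) (hr : 0 < r)
    (ρ : ι → ι → ℝ)
    (hsymm : ∀ x y, ρ x y = ρ y x) (hrefl : ∀ x, ρ x x = 0)
    (htri : ∀ x y z, ρ x z ≤ ρ x y + ρ y z)
    (A B : Finset ι) (hBA : B ⊆ A)
    (hdiamA : ∀ x ∈ A, ∀ y ∈ A, ρ x y ≤ 3 * r)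
    (hdiamB : ∀ x ∈ B, ∀ y ∈ B, ρ x y ≤ 2 * r)
    (hmax : ∀ C : Finset ι, C ⊆ A → (∀ x ∈ C, ∀ y ∈ C, ρ x y ≤ 2 * r) →
      C.card ≤ B.card) :
    (1 / 2 : ℝ) * max (A.card : ℝ) (2 * B.card) * ((A \ B).card : ℝ)
      ≤ (1 / 2 : ℝ) * Set.ncard
        {p : ι × ι | p.1 ∈ A ∧ p.2 ∈ A ∧ r < ρ p.1 p.2 ∧ ρ p.1 p.2 ≤ 3 * r} := by
  have hB : IsMaxCluster ρ (2 * r) A B := ⟨hBA, hdiamB, hmax⟩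
  have hmedium : {p : ι × ι | p.1 ∈ A ∧ p.2 ∈ A ∧ r < ρ p.1 p.2 ∧ ρ p.1 p.2 ≤ 3 * r}
      = ↑({p ∈ A ×ˢ A | ¬ρ p.1 p.2 ≤ r}) := by
    ext p
    simp only [Set.mem_ofPred_eq, coe_filter, mem_product, not_le]
    exact ⟨fun h => ⟨⟨h.1, h.2.1⟩, h.2.2.1⟩, fun h => ⟨h.1.1, h.1.2, h.2, hdiamA _ h.1.1 _ h.1.2⟩⟩
  have hcount : #(nearPairs ρ r A) + #{p ∈ A ×ˢ A | ¬ρ p.1 p.2 ≤ r} = #A * #A := by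
    rw [← card_product]
    exact card_filter_add_card_filter_not _
  have hnear := card_nearPairs_le hsymm htri hrefl hr.le hB
  have hnear' := card_nearPairs_le_mul hsymm htri hmax
  have hbound : max #A (2 * #B) * #(A \ B) ≤ #{p ∈ A ×ˢ A | ¬ρ p.1 p.2 ≤ r} := by
    rw [← card_sdiff_add_card_eq_card hBA] at hcount hnear' ⊢
    rcases le_total (#(A \ B) + #B) (2 * #B) with h | h
    · rw [max_eq_right h]; nlinarith
    · rw [max_eq_left h]; nlinarith
  rw [hmedium, Set.ncard_coe_finset]
  have := (Nat.cast_le (α := ℝ)).2 hbound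
  push_cast at this
  linarith
end

section
/- Let Z be a finite semimetric space, partitioned as Z = X ∪ U ∪ Y, where X is a 2r-cluster of maximal cardinality in Z, U is covered by a maximal matching of r-long edges (pairs at distance > 3r) within Z \ X, and Y = Z \ (X ∪ U). Assume every point of Z is within distance 3r of every point of X, and X ∪ Y has diameter ≤ 3r. Then the number of medium edges (pairs with r < ρ(x,y) ≤ 3r) in Z satisfies M(Z) ≥ (1/2)(|X| + |Y|)|Y| + (1/2)|U||X|. -/
/-- Medium-edge lower bound in a greedy cluster part Z = X ⊔ U ⊔ Y:
`M(Z) ≥ (1/2)(|X|+|Y|)|Y| + (1/2)|U||X|`. -/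
theorem stmt_3 {ι : Type*} [DecidableEq ι] (r : ℝ) (hr : 0 < r)
    (ρ : ι → ι → ℝ)
    (hsymm : ∀ x y, ρ x y = ρ y x) (hrefl : ∀ x, ρ x x = 0)
    (htri : ∀ x y z, ρ x z ≤ ρ x y + ρ y z)
    (Z X U Y : Finset ι)
    (hpart : Z = X ∪ U ∪ Y)
    (hXU : Disjoint X U) (hXY : Disjoint X Y) (hUY : Disjoint U Y)
    (hdiamX : ∀ x ∈ X, ∀ y ∈ X, ρ x y ≤ 2 * r)
    (hmax : ∀ C : Finset ι, C ⊆ Z → (∀ x ∈ C, ∀ y ∈ C, ρ x y ≤ 2 * r) →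
      C.card ≤ X.card)
    (hnear : ∀ z ∈ Z, ∀ x ∈ X, ρ z x ≤ 3 * r)
    (hdiamXY : ∀ a ∈ X ∪ Y, ∀ b ∈ X ∪ Y, ρ a b ≤ 3 * r)
    (m : ι → ι)
    (hmatch : ∀ u ∈ U, m u ∈ U ∧ m (m u) = u ∧ m u ≠ u ∧ 3 * r < ρ u (m u)) :
    (1 / 2 : ℝ) * ((X.card : ℝ) + Y.card) * Y.card
      + (1 / 2 : ℝ) * U.card * X.card
    ≤ (1 / 2 : ℝ) * Set.ncard
        {p : ι × ι | p.1 ∈ Z ∧ p.2 ∈ Z ∧ r < ρ p.1 p.2 ∧ ρ p.1 p.2 ≤ 3 * r} := by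
  classical
  set W : Finset ι := X ∪ Y with hW
  have hXZ : X ⊆ Z := by rw [hpart]; intro a ha; simp [Finset.mem_union]; tauto
  have hYZ : Y ⊆ Z := by rw [hpart]; intro a ha; simp [Finset.mem_union]; tauto
  have hUZ : U ⊆ Z := by rw [hpart]; intro a ha; simp [Finset.mem_union]; tauto
  have hWZ : W ⊆ Z := Finset.union_subset hXZ hYZ
  have hWcard : W.card = X.card + Y.card := Finset.card_union_of_disjoint hXY
  set S : Finset (ι × ι) :=
    (Z ×ˢ Z).filter (fun p => r < ρ p.1 p.2 ∧ ρ p.1 p.2 ≤ 3 * r) with hS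
  have hncard :
      {p : ι × ι | p.1 ∈ Z ∧ p.2 ∈ Z ∧ r < ρ p.1 p.2 ∧ ρ p.1 p.2 ≤ 3 * r} = ↑S := by
    ext p
    simp only [hS, Set.mem_setOf_eq, Finset.coe_filter, Finset.mem_product]
    tauto
  rw [hncard, Set.ncard_coe_finset]
  -- the three families
  set S1 : Finset (ι × ι) := (W ×ˢ W).filter (fun p => ¬ ρ p.1 p.2 ≤ r) with hS1
  set S2 : Finset (ι × ι) :=
    (U ×ˢ X).filter (fun p => r < ρ p.1 p.2 ∧ ρ p.1 p.2 ≤ 3 * r) with hS2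
  set S3 : Finset (ι × ι) :=
    (X ×ˢ U).filter (fun p => r < ρ p.1 p.2 ∧ ρ p.1 p.2 ≤ 3 * r) with hS3
  -- subset facts
  have hS1S : S1 ⊆ S := by
    intro p hp
    simp only [hS1, Finset.mem_filter, Finset.mem_product] at hp
    obtain ⟨⟨h1, h2⟩, h3⟩ := hp
    simp only [hS, Finset.mem_filter, Finset.mem_product]
    exact ⟨⟨hWZ h1, hWZ h2⟩, lt_of_not_ge h3, hdiamXY _ h1 _ h2⟩
  have hS2S : S2 ⊆ S := by
    intro p hp
    simp only [hS2, Finset.mem_filter, Finset.mem_product] at hp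
    simp only [hS, Finset.mem_filter, Finset.mem_product]
    exact ⟨⟨hUZ hp.1.1, hXZ hp.1.2⟩, hp.2⟩
  have hS3S : S3 ⊆ S := by
    intro p hp
    simp only [hS3, Finset.mem_filter, Finset.mem_product] at hp
    simp only [hS, Finset.mem_filter, Finset.mem_product]
    exact ⟨⟨hXZ hp.1.1, hUZ hp.1.2⟩, hp.2⟩
  -- Step A : W.card * Y.card ≤ S1.card
  have hA : W.card * Y.card ≤ S1.card := by
    set T : Finset (ι × ι) := (W ×ˢ W).filter (fun p => ρ p.1 p.2 ≤ r) with hT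
    have hsplit : T.card + S1.card = W.card * W.card := by
      have := Finset.card_filter_add_card_filter_not
        (s := W ×ˢ W) (p := fun p : ι × ι => ρ p.1 p.2 ≤ r)
      simpa [hT, hS1, Finset.card_product] using this
    have hTle : T.card ≤ W.card * X.card := by
      have hfib : ∀ p ∈ T, (p : ι × ι).1 ∈ W := by
        intro p hp
        simp only [hT, Finset.mem_filter, Finset.mem_product] at hp
        exact hp.1.1
      rw [Finset.card_eq_sum_card_fiberwise hfib]
      have hbound : ∀ a ∈ W, (T.filter (fun p => p.1 = a)).card ≤ X.card := by
        intro a _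
        set C : Finset ι := W.filter (fun b => ρ a b ≤ r) with hC
        have h1 : (T.filter (fun p => p.1 = a)).card ≤ C.card := by
          apply Finset.card_le_card_of_injOn (fun p => p.2)
          · intro p hp
            simp only [hT, Finset.mem_coe, Finset.mem_filter, Finset.mem_product] at hp
            simp only [hC, Finset.mem_coe, Finset.mem_filter]
            exact ⟨hp.1.1.2, by rw [← hp.2]; exact hp.1.2⟩
          · intro p hp q hq hpq
            simp only [Finset.coe_filter, Set.mem_setOf_eq] at hp hq
            exact Prod.ext (hp.2.trans hq.2.symm) hpq
        have h2 : C.card ≤ X.card := by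
          apply hmax C (fun b hb => hWZ (by simp only [hC, Finset.mem_filter] at hb; exact hb.1))
          intro x hx y hy
          simp only [hC, Finset.mem_filter] at hx hy
          calc ρ x y ≤ ρ x a + ρ a y := htri x a y
            _ = ρ a x + ρ a y := by rw [hsymm]
            _ ≤ r + r := add_le_add hx.2 hy.2
            _ ≤ 2 * r := by linarith
        exact h1.trans h2
      calc ∑ a ∈ W, (T.filter (fun p => p.1 = a)).card
          ≤ ∑ _a ∈ W, X.card := Finset.sum_le_sum hbound
        _ = W.card * X.card := by rw [Finset.sum_const, smul_eq_mul]
    have : W.card * W.card = W.card * X.card + W.card * Y.card := by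
      rw [hWcard]; ring
    omega
  -- Step B : U.card * X.card ≤ 2 * S2.card  (and same for S3)
  have hB : ∀ (V : Finset (ι × ι)),
      V = (U ×ˢ X).filter (fun p => r < ρ p.1 p.2 ∧ ρ p.1 p.2 ≤ 3 * r) →
      U.card * X.card ≤ 2 * V.card := by
    intro V hV
    set g : ι × ι → ι × ι := fun p => if r < ρ p.1 p.2 then p else (m p.1, p.2) with hg
    have himg : ∀ p ∈ U ×ˢ X, g p ∈ V := by
      intro p hp
      simp only [Finset.mem_product] at hp
      obtain ⟨hu, hx⟩ := hp
      obtain ⟨hmU, hmm, hne, hlong⟩ := hmatch p.1 hu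
      by_cases h : r < ρ p.1 p.2
      · simp only [hg, if_pos h, hV, Finset.mem_filter, Finset.mem_product]
        exact ⟨⟨hu, hx⟩, h, hnear _ (hUZ hu) _ hx⟩
      · push_neg at h
        have h1 : 3 * r < ρ p.1 p.2 + ρ p.2 (m p.1) := lt_of_lt_of_le hlong (htri _ _ _)
        have h2 : r < ρ (m p.1) p.2 := by
          rw [hsymm]; linarith
        simp only [hg, if_neg (not_lt.mpr h), hV, Finset.mem_filter, Finset.mem_product]
        exact ⟨⟨hmU, hx⟩, h2, hnear _ (hUZ hmU) _ hx⟩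
    have hcardimg : ((U ×ˢ X).image g).card ≤ V.card :=
      Finset.card_le_card (Finset.image_subset_iff.mpr himg)
    have hfib : (U ×ˢ X).card ≤ 2 * ((U ×ˢ X).image g).card := by
      apply Finset.card_le_mul_card_image
      intro b _
      have hsub : (U ×ˢ X).filter (fun p => g p = b) ⊆ {(b.1, b.2), (m b.1, b.2)} := by
        intro p hp
        simp only [Finset.mem_filter, Finset.mem_product] at hp
        obtain ⟨⟨hu, hx⟩, hgp⟩ := hp
        obtain ⟨hmU, hmm, hne, hlong⟩ := hmatch p.1 hu
        simp only [Finset.mem_insert, Finset.mem_singleton]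
        by_cases h : r < ρ p.1 p.2
        · left
          rw [hg] at hgp; simp only [if_pos h] at hgp
          subst hgp; simp
        · right
          rw [hg] at hgp; simp only [if_neg h] at hgp
          subst hgp; simp [hmm]
      calc ((U ×ˢ X).filter (fun p => g p = b)).card
          ≤ ({(b.1, b.2), (m b.1, b.2)} : Finset (ι × ι)).card := Finset.card_le_card hsub
        _ ≤ 2 := Finset.card_insert_le _ _ |>.trans (by simp)
    calc U.card * X.card = (U ×ˢ X).card := (Finset.card_product _ _).symm
      _ ≤ 2 * ((U ×ˢ X).image g).card := hfib
      _ ≤ 2 * V.card := by omega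
  have hB2 : U.card * X.card ≤ 2 * S2.card := hB S2 hS2
  have hS23 : S3.card = S2.card := by
    apply Finset.card_bij (fun p _ => Prod.swap p)
    · intro p hp
      simp only [hS3, Finset.mem_filter, Finset.mem_product] at hp
      simp only [hS2, Finset.mem_filter, Finset.mem_product, Prod.fst_swap, Prod.snd_swap]
      refine ⟨⟨hp.1.2, hp.1.1⟩, ?_, ?_⟩
      · rw [hsymm]; exact hp.2.1
      · rw [hsymm]; exact hp.2.2
    · intro p _ q _ h
      exact Prod.swap_injective h
    · intro b hb
      refine ⟨Prod.swap b, ?_, by simp⟩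
      simp only [hS2, Finset.mem_filter, Finset.mem_product] at hb
      simp only [hS3, Finset.mem_filter, Finset.mem_product, Prod.fst_swap, Prod.snd_swap]
      refine ⟨⟨hb.1.2, hb.1.1⟩, ?_, ?_⟩
      · rw [hsymm]; exact hb.2.1
      · rw [hsymm]; exact hb.2.2
  -- disjointness
  have hWU : Disjoint W U := by
    simp only [hW, Finset.disjoint_union_left]
    exact ⟨hXU, hUY.symm⟩
  have hd12 : Disjoint S1 S2 := by
    rw [Finset.disjoint_left]
    intro p hp1 hp2
    simp only [hS1, Finset.mem_filter, Finset.mem_product] at hp1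
    simp only [hS2, Finset.mem_filter, Finset.mem_product] at hp2
    exact Finset.disjoint_left.mp hWU hp1.1.1 hp2.1.1
  have hd13 : Disjoint S1 S3 := by
    rw [Finset.disjoint_left]
    intro p hp1 hp3
    simp only [hS1, Finset.mem_filter, Finset.mem_product] at hp1
    simp only [hS3, Finset.mem_filter, Finset.mem_product] at hp3
    exact Finset.disjoint_left.mp hWU hp1.1.2 hp3.1.2
  have hd23 : Disjoint S2 S3 := by
    rw [Finset.disjoint_left]
    intro p hp2 hp3
    simp only [hS2, Finset.mem_filter, Finset.mem_product] at hp2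
    simp only [hS3, Finset.mem_filter, Finset.mem_product] at hp3
    exact Finset.disjoint_left.mp hXU hp3.1.1 hp2.1.1
  have hunion : S1.card + S2.card + S3.card ≤ S.card := by
    have hd : Disjoint (S1 ∪ S2) S3 := by
      rw [Finset.disjoint_union_left]; exact ⟨hd13, hd23⟩
    calc S1.card + S2.card + S3.card
        = (S1 ∪ S2).card + S3.card := by rw [Finset.card_union_of_disjoint hd12]
      _ = ((S1 ∪ S2) ∪ S3).card := (Finset.card_union_of_disjoint hd).symm
      _ ≤ S.card := Finset.card_le_card
          (Finset.union_subset (Finset.union_subset hS1S hS2S) hS3S)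
  -- conclude
  have key : (X.card + Y.card) * Y.card + U.card * X.card ≤ S.card := by
    have := hA
    rw [hWcard] at this
    omega
  have keyR : ((X.card : ℝ) + Y.card) * Y.card + (U.card : ℝ) * X.card ≤ (S.card : ℝ) := by
    have := (Nat.cast_le (α := ℝ)).2 key
    push_cast at this
    linarith
  nlinarith [keyR]
end

section
/- Let W_1 ≥ W_2 ≥ ... ≥ W_n be nonnegative reals with sum S, and let σ_s denote the s-th elementary symmetric polynomial in W_1,...,W_n. Then (∑_{i=k+1}^n W_i)·σ_k(W_1,...,W_n) ≤ (k+1)·σ_{k+1}(W_1,...,W_n). -/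
/-- For decreasing nonnegative reals,
`(∑_{i>k} W_i) σ_k ≤ (k+1) σ_{k+1}`. -/
theorem stmt_5 (n k : ℕ) (hnk : k + 1 ≤ n) (W : ℕ → ℝ)
    (hnn : ∀ i < n, 0 ≤ W i)
    (hmono : ∀ i j : ℕ, i ≤ j → j < n → W j ≤ W i) :
    (∑ i ∈ Finset.Ico k n, W i) *
      (∑ t ∈ (Finset.range n).powersetCard k, ∏ i ∈ t, W i)
    ≤ (k + 1 : ℝ) *
      ∑ t ∈ (Finset.range n).powersetCard (k + 1), ∏ i ∈ t, W i := by
  classical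
  have hk : k ≤ n := le_trans (Nat.le_succ k) hnk
  -- Step 1: for each k-subset t, ∑_{Ico k n} W ≤ ∑_{range n \ t} W
  have key : ∀ t ∈ (Finset.range n).powersetCard k,
      (∑ i ∈ Finset.Ico k n, W i) ≤ ∑ i ∈ Finset.range n \ t, W i := by
    intro t ht
    rw [Finset.mem_powersetCard] at ht
    obtain ⟨hsub, hcard⟩ := ht
    have hc : (t \ Finset.range k).card = (Finset.range k \ t).card := by
      have h1 := Finset.card_inter_add_card_sdiff t (Finset.range k)
      have h2 := Finset.card_inter_add_card_sdiff (Finset.range k) t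
      rw [Finset.inter_comm] at h2
      rw [Finset.card_range] at h2
      omega
    have e := Finset.equivOfCardEq hc
    have h2 : ∑ i ∈ t \ Finset.range k, W i ≤ ∑ i ∈ Finset.range k \ t, W i := by
      rw [← Finset.sum_coe_sort (t \ Finset.range k) W,
        ← Finset.sum_coe_sort (Finset.range k \ t) W,
        ← e.sum_comp (fun x => W (x : ℕ))]
      apply Finset.sum_le_sum
      intro x _
      have hx := x.2
      have hex := (e x).2
      simp only [Finset.mem_sdiff, Finset.mem_range] at hx hex
      have hxn : (x : ℕ) < n := Finset.mem_range.mp (hsub hx.1)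
      exact hmono _ _ (by omega) hxn
    have h1 : ∑ i ∈ t, W i ≤ ∑ i ∈ Finset.range k, W i := by
      have e1 := Finset.sum_inter_add_sum_sdiff t (Finset.range k) W
      have e2 := Finset.sum_inter_add_sum_sdiff (Finset.range k) t W
      rw [Finset.inter_comm] at e2
      linarith
    have e3 : ∑ i ∈ Finset.Ico k n, W i
        = ∑ i ∈ Finset.range n, W i - ∑ i ∈ Finset.range k, W i :=
      Finset.sum_Ico_eq_sub W hk
    have e4 : ∑ i ∈ Finset.range n \ t, W i
        = ∑ i ∈ Finset.range n, W i - ∑ i ∈ t, W i :=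
      Finset.sum_sdiff_eq_sub hsub
    linarith
  -- Step 2: the identity
  have hid : ∑ t ∈ (Finset.range n).powersetCard k,
      (∏ j ∈ t, W j) * (∑ i ∈ Finset.range n \ t, W i)
      = (k + 1 : ℝ) * ∑ s ∈ (Finset.range n).powersetCard (k + 1), ∏ j ∈ s, W j := by
    have lhs_eq : ∑ t ∈ (Finset.range n).powersetCard k,
        (∏ j ∈ t, W j) * (∑ i ∈ Finset.range n \ t, W i)
        = ∑ t ∈ (Finset.range n).powersetCard k,
            ∑ i ∈ Finset.range n \ t, ∏ j ∈ insert i t, W j := by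
      refine Finset.sum_congr rfl fun t ht => ?_
      rw [Finset.mul_sum]
      refine Finset.sum_congr rfl fun i hi => ?_
      rw [Finset.mem_sdiff] at hi
      rw [Finset.prod_insert hi.2, mul_comm]
    have rhs_eq : (k + 1 : ℝ) * ∑ s ∈ (Finset.range n).powersetCard (k + 1), ∏ j ∈ s, W j
        = ∑ s ∈ (Finset.range n).powersetCard (k + 1), ∑ i ∈ s, ∏ j ∈ s, W j := by
      rw [Finset.mul_sum]
      refine Finset.sum_congr rfl fun s hs => ?_
      rw [Finset.mem_powersetCard] at hs
      rw [Finset.sum_const, hs.2, nsmul_eq_mul]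
      push_cast
      ring
    rw [lhs_eq, rhs_eq, Finset.sum_sigma', Finset.sum_sigma']
    refine Finset.sum_nbij' (fun p => ⟨insert p.2 p.1, p.2⟩)
      (fun p => ⟨p.1.erase p.2, p.2⟩) ?_ ?_ ?_ ?_ ?_
    · rintro ⟨t, i⟩ hp
      simp only [Finset.mem_sigma, Finset.mem_powersetCard, Finset.mem_sdiff] at hp ⊢
      obtain ⟨⟨hsub, hcard⟩, hi, hit⟩ := hp
      refine ⟨⟨Finset.insert_subset hi hsub, ?_⟩, Finset.mem_insert_self _ _⟩
      rw [Finset.card_insert_of_notMem hit, hcard]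
    · rintro ⟨s, i⟩ hp
      simp only [Finset.mem_sigma, Finset.mem_powersetCard, Finset.mem_sdiff] at hp ⊢
      obtain ⟨⟨hsub, hcard⟩, his⟩ := hp
      refine ⟨⟨(Finset.erase_subset _ _).trans hsub, ?_⟩, hsub his, Finset.notMem_erase _ _⟩
      rw [Finset.card_erase_of_mem his, hcard]; omega
    · rintro ⟨t, i⟩ hp
      simp only [Finset.mem_sigma, Finset.mem_sdiff] at hp
      have : (insert i t).erase i = t := Finset.erase_insert hp.2.2
      simp [this]
    · rintro ⟨s, i⟩ hp
      simp only [Finset.mem_sigma] at hp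
      have : insert i (s.erase i) = s := Finset.insert_erase hp.2
      simp [this]
    · rintro ⟨t, i⟩ hp
      rfl
  -- Combine
  calc (∑ i ∈ Finset.Ico k n, W i) * (∑ t ∈ (Finset.range n).powersetCard k, ∏ i ∈ t, W i)
      = ∑ t ∈ (Finset.range n).powersetCard k,
          (∏ i ∈ t, W i) * (∑ i ∈ Finset.Ico k n, W i) := by
        rw [← Finset.sum_mul, mul_comm]
    _ ≤ ∑ t ∈ (Finset.range n).powersetCard k,
          (∏ j ∈ t, W j) * (∑ i ∈ Finset.range n \ t, W i) := by
        refine Finset.sum_le_sum fun t ht => ?_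
        have hprod : 0 ≤ ∏ i ∈ t, W i := by
          refine Finset.prod_nonneg fun i hi => ?_
          have : i ∈ Finset.range n := (Finset.mem_powersetCard.mp ht).1 hi
          exact hnn i (Finset.mem_range.mp this)
        exact mul_le_mul_of_nonneg_left (key t ht) hprod
    _ = (k + 1 : ℝ) * ∑ t ∈ (Finset.range n).powersetCard (k + 1), ∏ i ∈ t, W i := hid
end

section
/- Let W_1 ≥ W_2 ≥ ... ≥ W_n ≥ 0 with ∑ W_i = S. If σ_{k+1}(W_1,...,W_n) ≤ βS^{k+1} and σ_k(W_1,...,W_n) ≥ (α'/k!)·S^k with α' > 0, then ∑_{i=1}^k W_i ≥ (1 - (k+1)!·β/α')·S. -/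
/-!
Since the `W i` decrease, every `k`-subset `t` of the indices has `∑_{j ∈ t} W j ≤ A`, the sum of
the `k` largest terms, so the complementary sum is at least `S - A`. Double counting pairs
(`k`-subset, outside index) against (`(k+1)`-subset, marked index) shows
`∑_{#t = k} (∑_{j ∉ t} W j) ∏_{i ∈ t} W i = (k + 1) σ_{k+1}`, hence `(S - A) σ_k ≤ (k + 1) σ_{k+1}`.
Inserting the two given bounds and dividing by `α' S^k / k!` gives `S - A ≤ (k+1)! β S / α'`.
-/

open Finset

lemma Fin.val_le_of_strictMono {k : ℕ} {f : Fin k → ℕ} (hf : StrictMono f) (i : Fin k) :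
    (i : ℕ) ≤ f i :=
  calc (i : ℕ) = #((Iio i).image f) := by rw [card_image_of_injective _ hf.injective, Fin.card_Iio]
    _ ≤ #(range (f i)) := card_le_card fun x hx => by
        obtain ⟨j, hj, rfl⟩ := mem_image.mp hx
        exact mem_range.mpr (hf (mem_Iio.mp hj))
    _ = f i := card_range _

lemma sum_le_sum_range_of_antitoneOn {M : Type*} [AddCommMonoid M] [PartialOrder M]
    [IsOrderedAddMonoid M] {W : ℕ → M} {n k : ℕ} (hW : AntitoneOn W (Set.Iio n))
    {t : Finset ℕ} (ht : t ⊆ range n) (hcard : #t = k) :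
    ∑ i ∈ t, W i ≤ ∑ i ∈ range k, W i := by
  set e := t.orderEmbOfFin hcard
  have he : ∀ i, e i < n := fun i => mem_range.mp (ht (t.orderEmbOfFin_mem hcard i))
  calc ∑ i ∈ t, W i = ∑ i : Fin k, W (e i) := by
        rw [← map_orderEmbOfFin_univ t hcard, sum_map]; rfl
    _ ≤ ∑ i : Fin k, W i := sum_le_sum fun i _ =>
        hW ((Fin.val_le_of_strictMono e.strictMono i).trans_lt (he i)) (he i)
          (Fin.val_le_of_strictMono e.strictMono i)
    _ = ∑ i ∈ range k, W i := Fin.sum_univ_eq_sum_range W k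

theorem Finset.sum_powersetCard_sum_sdiff_mul_prod {ι R : Type*} [DecidableEq ι] [CommSemiring R]
    (s : Finset ι) (k : ℕ) (f : ι → R) :
    ∑ t ∈ s.powersetCard k, (∑ j ∈ s \ t, f j) * ∏ i ∈ t, f i
      = (k + 1) * ∑ t ∈ s.powersetCard (k + 1), ∏ i ∈ t, f i := by
  have lhs : ∑ t ∈ s.powersetCard k, (∑ j ∈ s \ t, f j) * ∏ i ∈ t, f i
      = ∑ t ∈ s.powersetCard k, ∑ j ∈ s \ t, ∏ i ∈ insert j t, f i :=
    sum_congr rfl fun t _ => by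
      rw [sum_mul]
      exact sum_congr rfl fun j hj => (prod_insert (mem_sdiff.mp hj).2).symm
  have rhs : (k + 1 : R) * ∑ t ∈ s.powersetCard (k + 1), ∏ i ∈ t, f i
      = ∑ u ∈ s.powersetCard (k + 1), ∑ _j ∈ u, ∏ i ∈ u, f i := by
    rw [mul_sum]
    refine sum_congr rfl fun u hu => ?_
    rw [sum_const, (mem_powersetCard.mp hu).2, nsmul_eq_mul]
    push_cast; rfl
  rw [lhs, rhs, sum_sigma', sum_sigma']
  refine sum_nbij' (fun p => ⟨insert p.2 p.1, p.2⟩) (fun p => ⟨p.1.erase p.2, p.2⟩)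
    ?_ ?_ ?_ ?_ fun _ _ => rfl
  · rintro ⟨t, j⟩ hp
    simp only [mem_sigma, mem_powersetCard, mem_sdiff] at hp ⊢
    obtain ⟨⟨hts, rfl⟩, hjs, hjt⟩ := hp
    exact ⟨⟨insert_subset hjs hts, card_insert_of_notMem hjt⟩, mem_insert_self _ _⟩
  · rintro ⟨u, j⟩ hp
    simp only [mem_sigma, mem_powersetCard, mem_sdiff] at hp ⊢
    obtain ⟨⟨hus, hcard⟩, hju⟩ := hp
    exact ⟨⟨(erase_subset _ _).trans hus, by rw [card_erase_of_mem hju, hcard]; rfl⟩,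
      hus hju, notMem_erase _ _⟩
  · rintro ⟨t, j⟩ hp
    simp only [mem_sigma, mem_sdiff] at hp
    simp [erase_insert hp.2.2]
  · rintro ⟨u, j⟩ hp
    simp only [mem_sigma] at hp
    simp [insert_erase hp.2]

lemma sub_sum_range_mul_esymm_le {W : ℕ → ℝ} {n : ℕ} (hW0 : ∀ i < n, 0 ≤ W i)
    (hW : AntitoneOn W (Set.Iio n)) (k : ℕ) :
    (∑ i ∈ range n, W i - ∑ i ∈ range k, W i) * ∑ t ∈ (range n).powersetCard k, ∏ i ∈ t, W i
      ≤ (k + 1) * ∑ t ∈ (range n).powersetCard (k + 1), ∏ i ∈ t, W i := by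
  rw [← sum_powersetCard_sum_sdiff_mul_prod, mul_sum]
  refine sum_le_sum fun t ht => ?_
  obtain ⟨hts, hcard⟩ := mem_powersetCard.mp ht
  refine mul_le_mul_of_nonneg_right ?_ (prod_nonneg fun i hi => hW0 i (mem_range.mp (hts hi)))
  rw [sum_sdiff_eq_sub hts]
  linarith [sum_le_sum_range_of_antitoneOn hW hts hcard]

theorem stmt_6_general (n k : ℕ) (hnk : k + 1 ≤ n) (W : ℕ → ℝ) (α' β : ℝ)
    (hα' : 0 < α')
    (hnn : ∀ i < n, 0 ≤ W i)
    (hmono : ∀ i j : ℕ, i ≤ j → j < n → W j ≤ W i)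
    (hσk1 : ∑ t ∈ (Finset.range n).powersetCard (k + 1), ∏ i ∈ t, W i
      ≤ β * (∑ i ∈ Finset.range n, W i) ^ (k + 1))
    (hσk : (α' / (Nat.factorial k : ℝ)) * (∑ i ∈ Finset.range n, W i) ^ k
      ≤ ∑ t ∈ (Finset.range n).powersetCard k, ∏ i ∈ t, W i) :
    (1 - (Nat.factorial (k + 1) : ℝ) * β / α') * (∑ i ∈ Finset.range n, W i)
      ≤ ∑ i ∈ Finset.range k, W i := by
  set S := ∑ i ∈ range n, W i
  set A := ∑ i ∈ range k, W i
  have hA : 0 ≤ A := sum_nonneg fun i hi => hnn i (by simp at hi; omega)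
  have hAS : A ≤ S := sum_le_sum_of_subset_of_nonneg (range_subset_range.mpr (by omega))
    fun i hi _ => hnn i (mem_range.mp hi)
  obtain hS | hS := (hA.trans hAS).eq_or_lt
  · simpa [← hS] using hA
  have hchain : (S - A) * (α' / k.factorial * S ^ k) ≤ (k + 1) * (β * S ^ (k + 1)) :=
    calc (S - A) * (α' / k.factorial * S ^ k)
        ≤ (S - A) * ∑ t ∈ (range n).powersetCard k, ∏ i ∈ t, W i :=
          mul_le_mul_of_nonneg_left hσk (sub_nonneg.mpr hAS)
      _ ≤ (k + 1) * ∑ t ∈ (range n).powersetCard (k + 1), ∏ i ∈ t, W i :=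
          sub_sum_range_mul_esymm_le hnn (fun i _ j hj hij => hmono i j hij hj) k
      _ ≤ (k + 1) * (β * S ^ (k + 1)) := by gcongr
  have hgap : (S - A) * α' ≤ (k + 1).factorial * β * S := by
    have hk : (0 : ℝ) < k.factorial := by positivity
    refine le_of_mul_le_mul_right ?_ (pow_pos hS k)
    rw [div_mul_eq_mul_div, mul_div_assoc', div_le_iff₀ hk, pow_succ] at hchain
    rw [Nat.factorial_succ]
    push_cast
    linarith
  have hdeficit : S - A ≤ (k + 1).factorial * β / α' * S := by
    rw [div_mul_eq_mul_div, le_div_iff₀ hα']; linarith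
  linarith

/-- If `σ_{k+1} ≤ β S^{k+1}` and `σ_k ≥ (α'/k!) S^k` with `α' > 0`, then the
k largest terms sum to at least `(1 - (k+1)! β / α') S`. -/
theorem stmt_6 (n k : ℕ) (hnk : k + 1 ≤ n) (W : ℕ → ℝ) (α' β : ℝ)
    (hα' : 0 < α') (hβ : 0 < β)
    (hnn : ∀ i < n, 0 ≤ W i)
    (hmono : ∀ i j : ℕ, i ≤ j → j < n → W j ≤ W i)
    (hσk1 : ∑ t ∈ (Finset.range n).powersetCard (k + 1), ∏ i ∈ t, W i
      ≤ β * (∑ i ∈ Finset.range n, W i) ^ (k + 1))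
    (hσk : (α' / (Nat.factorial k : ℝ)) * (∑ i ∈ Finset.range n, W i) ^ k
      ≤ ∑ t ∈ (Finset.range n).powersetCard k, ∏ i ∈ t, W i) :
    (1 - (Nat.factorial (k + 1) : ℝ) * β / α') * (∑ i ∈ Finset.range n, W i)
      ≤ ∑ i ∈ Finset.range k, W i :=
  stmt_6_general n k hnk W α' β hα' hnn hmono hσk1 hσk
end

section
/- Let (X, ρ) be a finite semimetric space partitioned as X = Z_1 ⊔ ... ⊔ Z_n. Define Λ = ⋃_i {unordered pairs {x,y} ⊆ Z_i with ρ(x,y) > r}. Then the number of unordered r-antichains of order k in X is at most ∑_{s ≥ 0} σ_{k-2s}(|Z_1|,...,|Z_n|)·|Λ|^s, where σ_m is the m-th elementary symmetric polynomial and the sum is over integers s with 0 ≤ 2s ≤ k. -/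
/-!
Choose for every point `x` a part `p x` containing it. Any finite set `S` splits into
pairs lying in a common fibre of `p` and a remainder on which `p` is injective: as long
as two points of `S` share a fibre, remove them as a pair. For an `r`-antichain every such
pair lies in `Λ`, and the remainder, of size `k - 2s`, is a choice of one point from
each of `k - 2s` distinct parts. Hence every antichain is the image of a code in a set
of size `∑ₛ σ_{k-2s}(|Z₁|, …, |Zₙ|) |Λ|^s`.
-/

open Finset

namespace AntichainBound

variable {ι κ : Type*}

theorem exists_injOn_union_pairs [DecidableEq ι] (p : ι → κ) (S : Finset ι) :
    ∃ (s : ℕ) (W : Finset ι) (e : Fin s → Finset ι), Set.InjOn p W ∧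
      (∀ j, (e j).card = 2 ∧ ∃ i, ∀ x ∈ e j, p x = i) ∧
      W.card + 2 * s = S.card ∧ W ∪ univ.biUnion e = S := by
  induction S using Finset.strongInduction with
  | H S ih =>
    by_cases hS : Set.InjOn p S
    · exact ⟨0, S, Fin.elim0, hS, fun j => j.elim0, by simp, by simp⟩
    obtain ⟨x, hx, y, hy, hpxy, hxy⟩ : ∃ x ∈ S, ∃ y ∈ S, p x = p y ∧ x ≠ y := by
      simpa [Set.InjOn] using hS
    have hxyS : {x, y} ⊆ S := insert_subset hx (singleton_subset_iff.mpr hy)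
    obtain ⟨s, W, e, hW, he, hcard, hunion⟩ :=
      ih (S \ {x, y}) (sdiff_ssubset hxyS (insert_nonempty x {y}))
    refine ⟨s + 1, W, Fin.cons {x, y} e, hW,
      Fin.forall_fin_succ.mpr ⟨⟨card_pair hxy, p x, by simp [hpxy]⟩, by simpa using he⟩, ?_, ?_⟩
    · rw [card_sdiff_of_subset hxyS, card_pair hxy] at hcard
      have := card_le_card hxyS
      rw [card_pair hxy] at this
      omega
    · rw [← sdiff_union_of_subset hxyS, ← hunion]
      ext z
      simp only [mem_union, mem_biUnion, mem_univ, true_and, Fin.exists_fin_succ,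
        Fin.cons_zero, Fin.cons_succ]
      tauto

theorem exists_mem_pi_image_eq [DecidableEq ι] [DecidableEq κ] {p : ι → κ}
    {Z : κ → Finset ι} (hp : ∀ x, x ∈ Z (p x)) {W : Finset ι} (hW : Set.InjOn p W) :
    ∃ f ∈ (W.image p).pi Z, (W.image p).attach.image (fun i => f i.1 i.2) = W := by
  choose f hfW hpf using fun i (hi : i ∈ W.image p) => mem_image.mp hi
  refine ⟨f, mem_pi.mpr fun i hi => by simpa only [hpf i hi] using hp (f i hi), ?_⟩
  ext w
  constructor
  · intro hw
    obtain ⟨⟨i, hi⟩, -, rfl⟩ := mem_image.mp hw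
    exact hfW i hi
  · intro hw
    have hpw : p w ∈ W.image p := mem_image_of_mem p hw
    exact mem_image.mpr ⟨⟨p w, hpw⟩, mem_attach _ _, hW (hfW _ hpw) hw (hpf _ hpw)⟩

abbrev Code (ι κ : Type*) := Σ s : ℕ, (Σ t : Finset κ, ∀ i ∈ t, ι) × (Fin s → Finset ι)

def Code.decode [DecidableEq ι] (c : Code ι κ) : Finset ι :=
  c.2.1.1.attach.image (fun i => c.2.1.2 i.1 i.2) ∪ univ.biUnion c.2.2

variable [Fintype κ] [DecidableEq κ]

def codes (Z : κ → Finset ι) (Λ : Finset (Finset ι)) (k : ℕ) : Finset (Code ι κ) :=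
  (range (k / 2 + 1)).sigma fun s =>
    ((univ.powersetCard (k - 2 * s)).sigma fun t => t.pi Z) ×ˢ Fintype.piFinset fun _ => Λ

theorem card_codes (Z : κ → Finset ι) (Λ : Finset (Finset ι)) (k : ℕ) :
    (codes Z Λ k).card = ∑ s ∈ range (k / 2 + 1),
      (∑ t ∈ univ.powersetCard (k - 2 * s), ∏ i ∈ t, (Z i).card) * Λ.card ^ s := by
  simp [codes, card_sigma, card_pi]

theorem mem_image_decode_codes [DecidableEq ι] {p : ι → κ} {Z : κ → Finset ι}
    (hp : ∀ x, x ∈ Z (p x)) {Λ : Finset (Finset ι)} {S : Finset ι}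
    (hΛ : ∀ e ⊆ S, e.card = 2 → (∃ i, e ⊆ Z i) → e ∈ Λ) :
    S ∈ (codes Z Λ S.card).image Code.decode := by
  obtain ⟨s, W, e, hW, he, hcard, rfl⟩ := exists_injOn_union_pairs p S
  obtain ⟨f, hf, hfW⟩ := exists_mem_pi_image_eq hp hW
  refine mem_image.mpr ⟨⟨s, ⟨W.image p, f⟩, e⟩, ?_, by simp only [Code.decode, hfW]⟩
  simp only [codes, mem_sigma, mem_product, mem_range, mem_powersetCard, subset_univ,
    true_and, card_image_of_injOn hW, Fintype.mem_piFinset]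
  refine ⟨by omega, ⟨by omega, hf⟩, fun j => hΛ _ ?_ (he j).1 ?_⟩
  · exact subset_union_right.trans' (subset_biUnion_of_mem e (mem_univ j))
  · obtain ⟨i, hi⟩ := (he j).2
    exact ⟨i, fun x hx => hi x hx ▸ hp x⟩

end AntichainBound

open AntichainBound in
theorem stmt_9_general {ι : Type*} [Fintype ι] (r : ℝ)
    (ρ : ι → ι → ℝ)
    (n k : ℕ) (Z : Fin n → Finset ι)
    (hcover : ∀ x : ι, ∃ i, x ∈ Z i) :
    Set.ncard {S : Finset ι | S.card = k ∧
        ∀ x ∈ S, ∀ y ∈ S, x ≠ y → r < ρ x y}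
    ≤ ∑ s ∈ Finset.range (k / 2 + 1),
        (∑ t ∈ (Finset.univ : Finset (Fin n)).powersetCard (k - 2 * s),
          ∏ i ∈ t, (Z i).card) *
        (Set.ncard {e : Finset ι | e.card = 2 ∧ (∃ i, e ⊆ Z i) ∧
          ∀ x ∈ e, ∀ y ∈ e, x ≠ y → r < ρ x y}) ^ s := by
  classical
  choose p hp using hcover
  set Λ := {e : Finset ι | e.card = 2 ∧ (∃ i, e ⊆ Z i) ∧ ∀ x ∈ e, ∀ y ∈ e, x ≠ y → r < ρ x y}
  have hsub : {S : Finset ι | S.card = k ∧ ∀ x ∈ S, ∀ y ∈ S, x ≠ y → r < ρ x y} ⊆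
      (codes Z Λ.toFinset k).image Code.decode := by
    rintro S ⟨rfl, hS⟩
    refine mem_image_decode_codes hp fun e heS he2 heZ => Set.mem_toFinset.mpr ⟨he2, heZ, ?_⟩
    exact fun x hx y hy => hS x (heS hx) y (heS hy)
  calc _ ≤ ((codes Z Λ.toFinset k).image Code.decode).card := by
        rw [← Set.ncard_coe_finset]
        exact Set.ncard_le_ncard hsub
    _ ≤ (codes Z Λ.toFinset k).card := card_image_le
    _ = _ := by rw [card_codes, Set.ncard_eq_toFinset_card']

/-- Upper bound on the number of unordered r-antichains of order k in terms of
elementary symmetric polynomials of the part sizes and the number |Λ| of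
within-part long-or-medium pairs. -/
theorem stmt_9 {ι : Type*} [Fintype ι] (r : ℝ) (hr : 0 < r)
    (ρ : ι → ι → ℝ) (hsymm : ∀ x y, ρ x y = ρ y x)
    (n k : ℕ) (Z : Fin n → Finset ι)
    (hdisj : ∀ i j, i ≠ j → Disjoint (Z i) (Z j))
    (hcover : ∀ x : ι, ∃ i, x ∈ Z i) :
    Set.ncard {S : Finset ι | S.card = k ∧
        ∀ x ∈ S, ∀ y ∈ S, x ≠ y → r < ρ x y}
    ≤ ∑ s ∈ Finset.range (k / 2 + 1),
        (∑ t ∈ (Finset.univ : Finset (Fin n)).powersetCard (k - 2 * s),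
          ∏ i ∈ t, (Z i).card) *
        (Set.ncard {e : Finset ι | e.card = 2 ∧ (∃ i, e ⊆ Z i) ∧
          ∀ x ∈ e, ∀ y ∈ e, x ≠ y → r < ρ x y}) ^ s :=
  stmt_9_general r ρ n k Z hcover
end

section
/- Let X be a finite set with semimetric ρ and uniform measure, and suppose: (i) the number of unordered r-antichains of order k+1 is at most β|X|^{k+1}/(k+1)!; (ii) the number of unordered r-antichains of order k is at least α|X|^k/k!. Let Z_1, ..., Z_n be the greedy cluster partition with cores X_i (X_i a maximum-size 2r-cluster in the remaining space, Z_i its open r-neighborhood there), and let I_1 = {i : (k+1)|X_i| ≤ |Z_i|}. Then ∑_{i ∈ I_1} |Z_i| ≤ ((k+1)β/α)·|X|. -/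
/-!
Double count the pairs `(S, z)` with `S` an `r`-antichain of order `k` and `z` farther than `r`
from every point of `S`. A closed `r`-ball meets `Z_i` in a set of diameter `≤ 2r` avoiding
`Z_1, …, Z_{i-1}`, so in at most `|X_i|` points; hence for `i ∈ I_1` the `k` balls around `S` miss
at least `|Z_i| / (k+1)` points of `Z_i`, and every `S` has at least `∑_{I_1} |Z_i| / (k+1)`
extensions. A `(k+1)`-antichain arises from at most `k+1` pairs, so
`|A_k| · ∑_{I_1} |Z_i| ≤ (k+1)² |A_{k+1}|`, and the two counting hypotheses give the bound.
-/

open Finset Nat Function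

section Antichains

variable {ι : Type*} [Fintype ι] (ρ : ι → ι → ℝ) (r : ℝ)

open Classical in
noncomputable def antichains (k : ℕ) : Finset (Finset ι) :=
  {S | #S = k ∧ ∀ x ∈ S, ∀ y ∈ S, x ≠ y → r < ρ x y}

noncomputable def farPoints (S : Finset ι) : Finset ι :=
  {z | ∀ a ∈ S, r < ρ z a}

variable {ρ r}

@[simp]
theorem mem_antichains {k : ℕ} {S : Finset ι} :
    S ∈ antichains ρ r k ↔ #S = k ∧ ∀ x ∈ S, ∀ y ∈ S, x ≠ y → r < ρ x y := by
  simp [antichains]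

@[simp]
theorem mem_farPoints {S : Finset ι} {z : ι} : z ∈ farPoints ρ r S ↔ ∀ a ∈ S, r < ρ z a := by
  simp [farPoints]

theorem ncard_setOf_eq_card_antichains (k : ℕ) :
    Set.ncard {S : Finset ι | S.card = k ∧ ∀ x ∈ S, ∀ y ∈ S, x ≠ y → r < ρ x y} =
      #(antichains ρ r k) := by
  rw [← Set.ncard_coe_finset]
  congr 1
  ext S
  simp

theorem antichains_sized (k : ℕ) : (antichains ρ r k : Set (Finset ι)).Sized k :=
  fun _ hS ↦ (mem_antichains.mp hS).1

theorem notMem_of_mem_farPoints (hrefl : ∀ x, ρ x x = 0) (hr : 0 ≤ r) {S : Finset ι} {z : ι}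
    (hz : z ∈ farPoints ρ r S) : z ∉ S := fun hzS ↦ by
  have := mem_farPoints.mp hz z hzS
  linarith [hrefl z]

theorem insert_mem_antichains [DecidableEq ι] (hsymm : ∀ x y, ρ x y = ρ y x) {k : ℕ}
    {S : Finset ι} {z : ι} (hS : S ∈ antichains ρ r k) (hz : z ∈ farPoints ρ r S) (hzS : z ∉ S) :
    insert z S ∈ antichains ρ r (k + 1) := by
  obtain ⟨hcard, hsep⟩ := mem_antichains.mp hS
  have hfar := mem_farPoints.mp hz
  refine mem_antichains.mpr ⟨by rw [card_insert_of_notMem hzS, hcard], ?_⟩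
  intro x hx y hy hxy
  rcases mem_insert.mp hx with rfl | hxS <;> rcases mem_insert.mp hy with rfl | hyS
  · exact absurd rfl hxy
  · exact hfar y hyS
  · rw [hsymm]; exact hfar x hxS
  · exact hsep x hxS y hyS hxy

theorem card_farPoints_le [DecidableEq ι] (hsymm : ∀ x y, ρ x y = ρ y x)
    (hrefl : ∀ x, ρ x x = 0) (hr : 0 ≤ r) {k : ℕ} {S : Finset ι} (hS : S ∈ antichains ρ r k) :
    #(farPoints ρ r S) ≤ #{T ∈ antichains ρ r (k + 1) | S ⊆ T} := by
  refine card_le_card_of_injOn (insert · S) (fun z hz ↦ ?_) (fun z hz w hw hzw ↦ ?_)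
  · exact mem_filter.mpr ⟨insert_mem_antichains hsymm hS hz (notMem_of_mem_farPoints hrefl hr hz),
      subset_insert z S⟩
  · exact (insert_inj (notMem_of_mem_farPoints hrefl hr hz)).mp hzw

end Antichains

theorem sum_card_supersets_le {α : Type*} [DecidableEq α] {𝒜 ℬ : Finset (Finset α)} {k : ℕ}
    (h𝒜 : (𝒜 : Set (Finset α)).Sized k) (hℬ : (ℬ : Set (Finset α)).Sized (k + 1)) :
    ∑ S ∈ 𝒜, #{T ∈ ℬ | S ⊆ T} ≤ (k + 1) * #ℬ := by
  have hbelow : ∀ T ∈ ℬ, #{S ∈ 𝒜 | S ⊆ T} ≤ k + 1 := fun T hT ↦ calc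
    #{S ∈ 𝒜 | S ⊆ T} ≤ #(T.powersetCard k) :=
      card_le_card fun S hS ↦ mem_powersetCard.mpr ⟨(mem_filter.mp hS).2, h𝒜 (mem_filter.mp hS).1⟩
    _ = k + 1 := by rw [card_powersetCard, hℬ hT, Nat.choose_succ_self_right]
  calc ∑ S ∈ 𝒜, #{T ∈ ℬ | S ⊆ T}
      = ∑ T ∈ ℬ, #{S ∈ 𝒜 | S ⊆ T} := sum_card_bipartiteAbove_eq_sum_card_bipartiteBelow _
    _ ≤ #ℬ • (k + 1) := sum_le_card_nsmul _ _ _ hbelow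
    _ = (k + 1) * #ℬ := by rw [smul_eq_mul, mul_comm]

section Counting

variable {ι : Type*} [Fintype ι] [DecidableEq ι] {ρ : ι → ι → ℝ} {r : ℝ}

theorem card_antichains_mul_le (hsymm : ∀ x y, ρ x y = ρ y x) (hrefl : ∀ x, ρ x x = 0)
    (hr : 0 ≤ r) {k M : ℕ} (hM : ∀ S ∈ antichains ρ r k, M ≤ (k + 1) * #(farPoints ρ r S)) :
    #(antichains ρ r k) * M ≤ (k + 1) ^ 2 * #(antichains ρ r (k + 1)) := calc
  #(antichains ρ r k) * M = ∑ _S ∈ antichains ρ r k, M := by rw [sum_const, smul_eq_mul]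
  _ ≤ ∑ S ∈ antichains ρ r k, (k + 1) * #{T ∈ antichains ρ r (k + 1) | S ⊆ T} :=
    sum_le_sum fun S hS ↦
      (hM S hS).trans (Nat.mul_le_mul_left _ (card_farPoints_le hsymm hrefl hr hS))
  _ ≤ (k + 1) * ((k + 1) * #(antichains ρ r (k + 1))) := by
    rw [← mul_sum]
    exact Nat.mul_le_mul_left _ (sum_card_supersets_le (antichains_sized k) (antichains_sized _))
  _ = (k + 1) ^ 2 * #(antichains ρ r (k + 1)) := by ring

theorem card_le_succ_mul_card_inter_farPoints {Z S : Finset ι} {c k : ℕ}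
    (hball : ∀ a, #{z ∈ Z | ρ z a ≤ r} ≤ c) (hlarge : (k + 1) * c ≤ #Z) (hS : #S ≤ k) :
    #Z ≤ (k + 1) * #(Z ∩ farPoints ρ r S) := by
  have hsplit := card_inter_add_card_sdiff Z (farPoints ρ r S)
  have hnear : #(Z \ farPoints ρ r S) ≤ k * c := calc
    #(Z \ farPoints ρ r S) ≤ #(S.biUnion fun a ↦ {z ∈ Z | ρ z a ≤ r}) :=
      card_le_card fun z hz ↦ by
        simp only [mem_sdiff, mem_farPoints, not_forall, not_lt] at hz
        obtain ⟨hzZ, a, haS, hza⟩ := hz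
        exact mem_biUnion.mpr ⟨a, haS, mem_filter.mpr ⟨hzZ, hza⟩⟩
    _ ≤ ∑ a ∈ S, #{z ∈ Z | ρ z a ≤ r} := card_biUnion_le
    _ ≤ #S * c := sum_le_card_nsmul _ _ _ fun a _ ↦ hball a
    _ ≤ k * c := Nat.mul_le_mul_right _ hS
  -- with `F = farPoints ρ r S`: `(k + 1) |Z \ F| ≤ (k + 1) k c ≤ k |Z| = k (|Z ∩ F| + |Z \ F|)`
  nlinarith

end Counting

section GreedyPartition

variable {ι : Type*} {ρ : ι → ι → ℝ} {r : ℝ} {n : ℕ} {Xc Z : Fin n → Finset ι}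

theorem pairwise_disjoint_of_notMem_prev (hprev : ∀ m, ∀ x ∈ Z m, ∀ i < m, x ∉ Z i) :
    Pairwise (Disjoint on Z) := by
  have key : ∀ i j, i < j → Disjoint (Z i) (Z j) := fun i j hij ↦
    disjoint_left.mpr fun x hxi hxj ↦ hprev j x hxj i hij hxi
  intro i j hij
  rcases hij.lt_or_gt with h | h
  exacts [key i j h, (key j i h).symm]

theorem card_filter_dist_le_card_core (hsymm : ∀ x y, ρ x y = ρ y x)
    (htri : ∀ x y z, ρ x z ≤ ρ x y + ρ y z)
    (hmax : ∀ m : Fin n, ∀ C : Finset ι,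
      (∀ x ∈ C, ∀ i, i < m → x ∉ Z i) →
      (∀ x ∈ C, ∀ y ∈ C, ρ x y ≤ 2 * r) → C.card ≤ (Xc m).card)
    (hprev : ∀ m, ∀ x ∈ Z m, ∀ i < m, x ∉ Z i) (m : Fin n) (a : ι) :
    #{z ∈ Z m | ρ z a ≤ r} ≤ #(Xc m) := by
  refine hmax m _ (fun x hx ↦ hprev m x (mem_filter.mp hx).1) fun x hx y hy ↦ ?_
  calc ρ x y ≤ ρ x a + ρ y a := hsymm a y ▸ htri x a y
    _ ≤ 2 * r := by linarith [(mem_filter.mp hx).2, (mem_filter.mp hy).2]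

theorem sum_card_le_succ_mul_card_farPoints [Fintype ι] [DecidableEq ι]
    (hsymm : ∀ x y, ρ x y = ρ y x) (htri : ∀ x y z, ρ x z ≤ ρ x y + ρ y z)
    (hmax : ∀ m : Fin n, ∀ C : Finset ι,
      (∀ x ∈ C, ∀ i, i < m → x ∉ Z i) →
      (∀ x ∈ C, ∀ y ∈ C, ρ x y ≤ 2 * r) → C.card ≤ (Xc m).card)
    (hprev : ∀ m, ∀ x ∈ Z m, ∀ i < m, x ∉ Z i) {k : ℕ} {I : Finset (Fin n)}
    (hI : ∀ i ∈ I, (k + 1) * #(Xc i) ≤ #(Z i)) {S : Finset ι} (hS : #S ≤ k) :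
    ∑ i ∈ I, #(Z i) ≤ (k + 1) * #(farPoints ρ r S) := calc
  ∑ i ∈ I, #(Z i) ≤ ∑ i ∈ I, (k + 1) * #(Z i ∩ farPoints ρ r S) :=
    sum_le_sum fun i hi ↦ card_le_succ_mul_card_inter_farPoints
      (card_filter_dist_le_card_core hsymm htri hmax hprev i) (hI i hi) hS
  _ = (k + 1) * #(I.biUnion fun i ↦ Z i ∩ farPoints ρ r S) := by
    rw [← mul_sum, card_biUnion]
    exact (pairwise_disjoint_of_notMem_prev hprev).set_pairwise _ |>.mono'
      fun i j h ↦ h.mono inter_subset_left inter_subset_left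
  _ ≤ (k + 1) * #(farPoints ρ r S) :=
    Nat.mul_le_mul_left _ <| card_le_card <| biUnion_subset.mpr fun _ _ ↦ inter_subset_right

end GreedyPartition

theorem le_mul_of_mul_le_sq_mul {α β a b M N : ℝ} {k : ℕ} (hα : 0 < α) (hN : 0 < N)
    (ha : α * N ^ k / (k ! : ℝ) ≤ a) (hb : b ≤ β * N ^ (k + 1) / ((k + 1)! : ℝ)) (hM : 0 ≤ M)
    (hab : a * M ≤ (k + 1) ^ 2 * b) :
    M ≤ (k + 1) * β / α * N := by
  set c : ℝ := N ^ k / (k ! : ℝ)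
  have hc : 0 < c := by positivity
  have hbc : (k + 1) ^ 2 * (β * N ^ (k + 1) / ((k + 1)! : ℝ)) = (k + 1) * β * N * c := by
    simp only [c, Nat.factorial_succ, pow_succ]
    push_cast
    field_simp
  have : α * c * M ≤ (k + 1) * β * N * c := calc
    α * c * M ≤ a * M := by
      gcongr
      simpa only [c, mul_div_assoc] using ha
    _ ≤ (k + 1) ^ 2 * b := hab
    _ ≤ (k + 1) * β * N * c := hbc ▸ by gcongr
  rw [div_mul_eq_mul_div, le_div_iff₀ hα]
  nlinarith

theorem stmt_11_general {ι : Type*} [Fintype ι] (r α β : ℝ) (k n : ℕ)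
    (hr : 0 < r) (hα : 0 < α)
    (ρ : ι → ι → ℝ)
    (hsymm : ∀ x y, ρ x y = ρ y x) (hrefl : ∀ x, ρ x x = 0)
    (htri : ∀ x y z, ρ x z ≤ ρ x y + ρ y z)
    (Xc Z : Fin n → Finset ι)
    (hmax : ∀ m : Fin n, ∀ C : Finset ι,
      (∀ x ∈ C, ∀ i, i < m → x ∉ Z i) →
      (∀ x ∈ C, ∀ y ∈ C, ρ x y ≤ 2 * r) → C.card ≤ (Xc m).card)
    (hZ : ∀ m : Fin n, ∀ x : ι,
      x ∈ Z m ↔ ((∀ i, i < m → x ∉ Z i) ∧ ∃ y ∈ Xc m, ρ x y < r))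
    (hT1 : (Set.ncard {S : Finset ι | S.card = k + 1 ∧
        ∀ x ∈ S, ∀ y ∈ S, x ≠ y → r < ρ x y} : ℝ)
      ≤ β * (Fintype.card ι : ℝ) ^ (k + 1) / (Nat.factorial (k + 1) : ℝ))
    (hT2 : α * (Fintype.card ι : ℝ) ^ k / (Nat.factorial k : ℝ)
      ≤ (Set.ncard {S : Finset ι | S.card = k ∧
        ∀ x ∈ S, ∀ y ∈ S, x ≠ y → r < ρ x y} : ℝ)) :
    ∑ i ∈ Finset.univ.filter
        (fun i : Fin n => (k + 1) * (Xc i).card ≤ (Z i).card),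
      ((Z i).card : ℝ)
    ≤ (k + 1) * β / α * (Fintype.card ι : ℝ) := by
  classical
  rcases (Fintype.card ι).eq_zero_or_pos with hempty | hpos
  · have := Fintype.card_eq_zero_iff.mp hempty
    simp [eq_empty_of_isEmpty]
  have hprev : ∀ m, ∀ x ∈ Z m, ∀ i < m, x ∉ Z i := fun m x hx ↦ ((hZ m x).mp hx).1
  have hcount := card_antichains_mul_le hsymm hrefl hr.le fun S hS ↦
    sum_card_le_succ_mul_card_farPoints hsymm htri hmax hprev
      (I := {i | (k + 1) * #(Xc i) ≤ #(Z i)}) (fun i hi ↦ (mem_filter.mp hi).2)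
      (antichains_sized k hS).le
  rw [ncard_setOf_eq_card_antichains] at hT1 hT2
  rw [← Nat.cast_sum]
  exact le_mul_of_mul_le_sq_mul hα (by exact_mod_cast hpos) hT2 hT1 (Nat.cast_nonneg _)
    (by exact_mod_cast hcount)

/-- For the greedy cluster partition with cores X_i and parts Z_i, the parts
with `(k+1)|X_i| ≤ |Z_i|` have total size at most `(k+1)β/α · |X|`. -/
theorem stmt_11 {ι : Type*} [Fintype ι] (r α β : ℝ) (k n : ℕ)
    (hr : 0 < r) (hα : 0 < α) (hβ : 0 < β) (hk : 1 ≤ k)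
    (ρ : ι → ι → ℝ)
    (hsymm : ∀ x y, ρ x y = ρ y x) (hrefl : ∀ x, ρ x x = 0)
    (htri : ∀ x y z, ρ x z ≤ ρ x y + ρ y z)
    (Xc Z : Fin n → Finset ι)
    (hXZ : ∀ m, Xc m ⊆ Z m)
    (hdiam : ∀ m, ∀ x ∈ Xc m, ∀ y ∈ Xc m, ρ x y ≤ 2 * r)
    (hmax : ∀ m : Fin n, ∀ C : Finset ι,
      (∀ x ∈ C, ∀ i, i < m → x ∉ Z i) →
      (∀ x ∈ C, ∀ y ∈ C, ρ x y ≤ 2 * r) → C.card ≤ (Xc m).card)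
    (hZ : ∀ m : Fin n, ∀ x : ι,
      x ∈ Z m ↔ ((∀ i, i < m → x ∉ Z i) ∧ ∃ y ∈ Xc m, ρ x y < r))
    (hcover : ∀ x : ι, ∃ m, x ∈ Z m)
    (hT1 : (Set.ncard {S : Finset ι | S.card = k + 1 ∧
        ∀ x ∈ S, ∀ y ∈ S, x ≠ y → r < ρ x y} : ℝ)
      ≤ β * (Fintype.card ι : ℝ) ^ (k + 1) / (Nat.factorial (k + 1) : ℝ))
    (hT2 : α * (Fintype.card ι : ℝ) ^ k / (Nat.factorial k : ℝ)
      ≤ (Set.ncard {S : Finset ι | S.card = k ∧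
        ∀ x ∈ S, ∀ y ∈ S, x ≠ y → r < ρ x y} : ℝ)) :
    ∑ i ∈ Finset.univ.filter
        (fun i : Fin n => (k + 1) * (Xc i).card ≤ (Z i).card),
      ((Z i).card : ℝ)
    ≤ (k + 1) * β / α * (Fintype.card ι : ℝ) :=
  stmt_11_general r α β k n hr hα ρ hsymm hrefl htri Xc Z hmax hZ hT1 hT2
end
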